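/- arXiv:1406.5777 — 5 statements merged into one kernel-verified Lean document; each statement's English description precedes it below -/
import Mathlib

section
/- Let U be unitary and A self-adjoint with U ∈ C^1(A), and suppose the strong limit D := s-lim_{N→∞} (1/N) Σ_{n=0}^{N−1} U^n([A,U]U^{-1})U^{-n} exists. Then D is a bounded self-adjoint operator that commutes with U^n for every integer n. -/
/-!
Polarizing the form identity `⟪Aφ, Uφ⟫ - ⟪φ, UAφ⟫ = ⟪φ, Bφ⟫` and using `A = A†` shows that `U`
maps `dom A` into itself with `AUφ = UAφ + Bφ`. Comparing `⟪AUφ, Uψ⟫ = ⟪Uφ, AUψ⟫` with the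
symmetry of `A` gives `⟪Bφ, Uψ⟫ = ⟪Uφ, Bψ⟫` on the dense domain, i.e. `C = BU*` is self-adjoint.
The Birkhoff averages of `C` under the ⋆-automorphism `T ↦ UTU*` are therefore self-adjoint, and
so is their strong limit `D`. The averages of `UCU*` differ from those of `C` by
`(UᴺCU*ᴺ - C)/N → 0`, hence `UDU* = D`, and `D` commutes with every power of `U`.
-/

open scoped ComplexInnerProductSpace
open Filter Topology

theorem LinearMap.sesq_ext_of_apply_self {M : Type*} [AddCommGroup M] [Module ℂ M]
    {f g : M →ₗ⋆[ℂ] M →ₗ[ℂ] ℂ} (h : ∀ x, f x x = g x x) : f = g := by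
  rw [← sub_eq_zero]
  have h0 (x : M) : (f - g) x x = 0 := by simp [h x]
  ext x y
  have hsum := h0 (x + y)
  have hI := h0 (x + Complex.I • y)
  simp only [map_add, map_smul, LinearMap.add_apply, LinearMap.smul_apply, h0,
    LinearMap.map_smulₛₗ, Complex.conj_I, smul_eq_mul, zero_add, add_zero] at hsum hI
  simp only [LinearMap.zero_apply]
  linear_combination (hsum - Complex.I * hI) / 2 + ((f - g) x y - (f - g) y x) / 2 * Complex.I_sq

theorem ContinuousLinearMap.ext_inner_of_dense {𝕜 E : Type*} [RCLike 𝕜] [NormedAddCommGroup E]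
    [InnerProductSpace 𝕜 E] {p : Submodule 𝕜 E} (hp : Dense (p : Set E)) {S T : E →L[𝕜] E}
    (h : ∀ x ∈ p, ∀ y ∈ p, inner 𝕜 x (S y) = inner 𝕜 x (T y)) : S = T := by
  have hp_eq : ∀ y ∈ p, S y = T y := fun y hy ↦ ext_inner_left 𝕜 fun x ↦
    congrFun (Continuous.ext_on hp (by fun_prop) (by fun_prop) fun x hx ↦ h x hx y hy) x
  exact ContinuousLinearMap.ext fun y ↦
    congrFun (Continuous.ext_on hp S.continuous T.continuous hp_eq) y

theorem Commute.unitary_zpow_right {R : Type*} [Monoid R] [StarMul R] {a : R} {u : unitary R}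
    (h : Commute a u) (n : ℤ) : Commute a ↑(u ^ n) := by
  simpa [← Unitary.val_toUnits_apply, map_zpow] using h.units_zpow_right (u := Unitary.toUnits u) n

namespace Unitary

theorem conjStarAlgAut_iterate_apply {S R : Type*} [Semiring R] [StarMul R] [SMul S R]
    [IsScalarTower S R R] [SMulCommClass S R R] (u : unitary R) (n : ℕ) (x : R) :
    (conjStarAlgAut S R u)^[n] x = (u : R) ^ n * x * star (u : R) ^ n := by
  rw [← StarAlgEquiv.coe_pow, ← map_pow, conjStarAlgAut_apply, SubmonoidClass.coe_pow, star_pow]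

section CStarRing
variable {𝕜 R : Type*} [RCLike 𝕜] [NormedRing R] [StarRing R] [CStarRing R] [NormedAlgebra 𝕜 R]

theorem norm_conjStarAlgAut (u : unitary R) (x : R) : ‖conjStarAlgAut 𝕜 R u x‖ = ‖x‖ := by
  rw [conjStarAlgAut_apply, ← coe_star, CStarRing.norm_mul_coe_unitary,
    CStarRing.norm_coe_unitary_mul]

theorem tendsto_birkhoffAverage_conjStarAlgAut_apply_sub (u : unitary R) (x : R) :
    Tendsto (fun n ↦ birkhoffAverage 𝕜 (conjStarAlgAut 𝕜 R u) id n (conjStarAlgAut 𝕜 R u x) -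
      birkhoffAverage 𝕜 (conjStarAlgAut 𝕜 R u) id n x) atTop (𝓝 0) := by
  refine tendsto_birkhoffAverage_apply_sub_birkhoffAverage (𝕜 := 𝕜) ?_
  refine isBounded_iff_forall_norm_le.2 ⟨‖x‖, ?_⟩
  rintro _ ⟨n, rfl⟩
  simp only [id_eq, ← StarAlgEquiv.coe_pow, ← map_pow, norm_conjStarAlgAut, le_rfl]

end CStarRing

end Unitary

theorem IsSelfAdjoint.birkhoffAverage_id {𝕜 R : Type*} [Field 𝕜] [StarRing 𝕜] [AddCommMonoid R]
    [StarAddMonoid R] [Module 𝕜 R] [StarModule 𝕜 R] {f : R → R}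
    (hf : ∀ y, IsSelfAdjoint y → IsSelfAdjoint (f y)) {x : R} (hx : IsSelfAdjoint x) (n : ℕ) :
    IsSelfAdjoint (birkhoffAverage 𝕜 f id n x) :=
  (IsSelfAdjoint.natCast n).inv₀.smul <| isSelfAdjoint_sum _ fun k _ ↦
    Function.Iterate.rec IsSelfAdjoint hx hf k

section StrongLimits
variable {𝕜 E : Type*} [RCLike 𝕜] [NormedAddCommGroup E] [InnerProductSpace 𝕜 E] [CompleteSpace E]

theorem ContinuousLinearMap.isSelfAdjoint_of_tendsto_apply {ι : Type*} {l : Filter ι} [l.NeBot]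
    {T : ι → E →L[𝕜] E} {D : E →L[𝕜] E} (hT : ∀ i, IsSelfAdjoint (T i))
    (hD : ∀ x, Tendsto (fun i ↦ T i x) l (𝓝 (D x))) : IsSelfAdjoint D := by
  rw [ContinuousLinearMap.isSelfAdjoint_iff_isSymmetric]
  intro x y
  refine tendsto_nhds_unique ((hD x).inner tendsto_const_nhds) ?_
  exact (tendsto_const_nhds.inner (hD y)).congr fun i ↦ ((hT i).isSymmetric x y).symm

theorem Unitary.conjStarAlgAut_eq_of_tendsto_birkhoffAverage_apply (u : unitary (E →L[𝕜] E))
    {C D : E →L[𝕜] E}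
    (hD : ∀ x, Tendsto (fun n ↦ birkhoffAverage 𝕜 (conjStarAlgAut 𝕜 _ u) id n C x) atTop
      (𝓝 (D x))) :
    conjStarAlgAut 𝕜 _ u D = D := by
  have hdiff (x : E) := ((ContinuousLinearMap.apply 𝕜 E x).continuous.tendsto 0).comp
    (tendsto_birkhoffAverage_conjStarAlgAut_apply_sub (𝕜 := 𝕜) u C)
  set f := conjStarAlgAut 𝕜 (E →L[𝕜] E) u
  have hshift (n : ℕ) : birkhoffAverage 𝕜 f id n (f C) = f (birkhoffAverage 𝕜 f id n C) := by
    rw [map_birkhoffAverage 𝕜 𝕜 f, birkhoffAverage, birkhoffAverage, birkhoffSum, birkhoffSum]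
    simp only [id, Function.comp_apply, Function.Commute.iterate_self f _ C]
  ext x
  have hconj : Tendsto (fun n ↦ birkhoffAverage 𝕜 f id n (f C) x) atTop (𝓝 (f D x)) := by
    simp only [hshift]
    exact ((u : E →L[𝕜] E).continuous.tendsto _).comp (hD _)
  refine tendsto_nhds_unique hconj ?_
  simpa only [ContinuousLinearMap.apply_apply, Function.comp_def, sub_apply,
    map_zero, add_zero, add_sub_cancel] using (hD x).add (hdiff x)

end StrongLimits

section Commutator
variable {H : Type*} [NormedAddCommGroup H] [InnerProductSpace ℂ H] {A : H →ₗ.[ℂ] H}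
  {U B : H →L[ℂ] H}

def LinearPMap.IsFormCommutator (A : H →ₗ.[ℂ] H) (U B : H →L[ℂ] H) : Prop :=
  ∀ φ ψ : A.domain, ⟪A φ, U (ψ : H)⟫ - ⟪(φ : H), U (A ψ)⟫ = ⟪(φ : H), B (ψ : H)⟫

theorem LinearPMap.isFormCommutator_of_forall_self
    (hB : ∀ φ : A.domain, ⟪A φ, U (φ : H)⟫ - ⟪(φ : H), U (A φ)⟫ = ⟪(φ : H), B (φ : H)⟫) :
    A.IsFormCommutator U B := by
  have hform := LinearMap.sesq_ext_of_apply_self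
    (f := ((innerₛₗ ℂ).comp A.toFun).compl₂ (U.toLinearMap ∘ₗ A.domain.subtype) -
      ((innerₛₗ ℂ).comp A.domain.subtype).compl₂ (U.toLinearMap ∘ₗ A.toFun))
    (g := ((innerₛₗ ℂ).comp A.domain.subtype).compl₂ (B.toLinearMap ∘ₗ A.domain.subtype))
    (fun φ ↦ by simpa using hB φ)
  exact fun φ ψ ↦ by simpa using congr($hform φ ψ)

variable [CompleteSpace H]

namespace LinearPMap.IsFormCommutator

theorem mem_adjoint_graph (hAB : A.IsFormCommutator U B) (hA : Dense (A.domain : Set H))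
    (φ : A.domain) : ((U φ, U (A φ) + B φ) : H × H) ∈ A.adjoint.graph := by
  have hadj (x : A.domain) : ⟪U (A φ) + B φ, (x : H)⟫ = ⟪U (φ : H), A x⟫ := by
    rw [inner_add_left, ← inner_conj_symm (B φ) (x : H), ← hAB x φ, RingHom.map_sub,
      inner_conj_symm, inner_conj_symm]
    ring
  rw [mem_graph_iff]
  exact ⟨⟨U φ, mem_adjoint_domain_of_exists _ ⟨_, hadj⟩⟩, rfl, adjoint_apply_eq hA _ hadj⟩

theorem inner_symm (hAB : A.IsFormCommutator U B) (hA : IsSelfAdjoint A)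
    (hU : U ∈ unitary (H →L[ℂ] H)) (φ ψ : A.domain) :
    ⟪B (φ : H), U (ψ : H)⟫ = ⟪U (φ : H), B (ψ : H)⟫ := by
  have hadj : A.adjoint = A := hA
  have hsymm : A.IsFormalAdjoint A := by
    simpa only [hadj] using LinearPMap.adjoint_isFormalAdjoint hA.dense_domain
  have hgraph (χ : A.domain) : ((U χ, U (A χ) + B χ) : H × H) ∈ A.graph := by
    simpa only [hadj] using hAB.mem_adjoint_graph hA.dense_domain χ
  obtain ⟨x, hx, hAx⟩ := (LinearPMap.mem_graph_iff _).1 (hgraph φ)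
  obtain ⟨y, hy, hAy⟩ := (LinearPMap.mem_graph_iff _).1 (hgraph ψ)
  have h := hsymm x y
  rw [hAx, hAy, hx, hy, inner_add_left, inner_add_right, U.inner_map_map_of_mem_unitary hU,
    U.inner_map_map_of_mem_unitary hU, hsymm φ ψ] at h
  linear_combination h

theorem isSelfAdjoint_mul_star (hAB : A.IsFormCommutator U B) (hA : IsSelfAdjoint A)
    (hU : U ∈ unitary (H →L[ℂ] H)) : IsSelfAdjoint (B * star U) := by
  have hBU : star B * U = star U * B :=
    ContinuousLinearMap.ext_inner_of_dense hA.dense_domain fun x hx y hy ↦ by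
      simp only [mul_apply_eq_comp, ContinuousLinearMap.star_eq_adjoint,
        ContinuousLinearMap.adjoint_inner_right]
      exact hAB.inner_symm hA hU ⟨x, hx⟩ ⟨y, hy⟩
  calc star (B * star U) = U * star B * (U * star U) := by
        rw [Unitary.mul_star_self_of_mem hU, mul_one, star_mul, star_star]
    _ = U * (star U * B) * star U := by rw [← hBU]; noncomm_ring
    _ = B * star U := by rw [← mul_assoc, Unitary.mul_star_self_of_mem hU, one_mul]

end LinearPMap.IsFormCommutator

end Commutator

/-- Let `U` be unitary and `A` self-adjoint with `U ∈ C¹(A)` (bounded commutator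
`B = [A,U]`), and suppose the strong limit
`D = s-lim (1/N) ∑_{n<N} U^n ([A,U]U⁻¹) U^{-n}` exists.  Then `D` is a bounded self-adjoint
operator commuting with `U^n` for every integer `n`. -/
theorem stmt3 {𝓗 : Type*} [NormedAddCommGroup 𝓗] [InnerProductSpace ℂ 𝓗] [CompleteSpace 𝓗]
    (U : 𝓗 →L[ℂ] 𝓗) (hU : U ∈ unitary (𝓗 →L[ℂ] 𝓗))
    (A : 𝓗 →ₗ.[ℂ] 𝓗) (hA : IsSelfAdjoint A)
    (B : 𝓗 →L[ℂ] 𝓗)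
    (hB : ∀ φ : A.domain, ⟪A φ, U (φ : 𝓗)⟫ - ⟪(φ : 𝓗), U (A φ)⟫ = ⟪(φ : 𝓗), B (φ : 𝓗)⟫)
    (D : 𝓗 →L[ℂ] 𝓗)
    (hD : ∀ ψ : 𝓗, Tendsto
      (fun N : ℕ => ((N : ℂ)⁻¹ • ∑ n ∈ Finset.range N, U ^ n * (B * star U) * (star U) ^ n) ψ)
      atTop (nhds (D ψ))) :
    IsSelfAdjoint D ∧ ∀ n : ℤ,
      D * (((⟨U, hU⟩ : unitary (𝓗 →L[ℂ] 𝓗)) ^ n : unitary (𝓗 →L[ℂ] 𝓗)) : 𝓗 →L[ℂ] 𝓗) =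
        (((⟨U, hU⟩ : unitary (𝓗 →L[ℂ] 𝓗)) ^ n : unitary (𝓗 →L[ℂ] 𝓗)) : 𝓗 →L[ℂ] 𝓗) * D := by
  set u : unitary (𝓗 →L[ℂ] 𝓗) := ⟨U, hU⟩
  set f := Unitary.conjStarAlgAut ℂ (𝓗 →L[ℂ] 𝓗) u
  have hC : IsSelfAdjoint (B * star U) :=
    (LinearPMap.isFormCommutator_of_forall_self hB).isSelfAdjoint_mul_star hA hU
  have havg (N : ℕ) : (N : ℂ)⁻¹ • ∑ n ∈ Finset.range N, U ^ n * (B * star U) * (star U) ^ n =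
      birkhoffAverage ℂ f id N (B * star U) := by
    simp only [birkhoffAverage, birkhoffSum, id, f, Unitary.conjStarAlgAut_iterate_apply]
    rfl
  simp only [havg] at hD
  have hDU : Commute D u := ((commute_unitary_iff_star_right_conjugate hU).2
    (Unitary.conjStarAlgAut_eq_of_tendsto_birkhoffAverage_apply u hD)).symm
  exact ⟨ContinuousLinearMap.isSelfAdjoint_of_tendsto_apply
    (hC.birkhoffAverage_id (fun y hy ↦ hy.map f)) hD, hDU.unitary_zpow_right⟩
end

section
/- Let U be unitary and A self-adjoint with U ∈ C^1(A). Assume the strong limit D := s-lim_{N→∞} (1/N) Σ_{n=0}^{N−1} U^n([A,U]U^{-1})U^{-n} exists and that D^{-1}η(D) maps dom(A) into dom(A) for each smooth compactly supported function η on ℝ∖{0}. Then lim_{N→∞} ⟨φ, U^N ψ⟩ = 0 for every φ in the orthogonal complement of ker(D) and every ψ ∈ H. -/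
open scoped ComplexInnerProductSpace
open Filter

/-- strong mixing for discrete flows.  Let `U` be unitary and `A` self-adjoint
with `U ∈ C¹(A)` (bounded commutator `B = [A,U]`).  Assume the strong limit
`D = s-lim (1/N) ∑_{n<N} U^n ([A,U]U⁻¹) U^{-n}` exists (a bounded self-adjoint operator) and that
`D⁻¹η(D)` maps `dom A` into `dom A` for each `η ∈ C_c^∞(ℝ \ {0})`.  Then
`⟪φ, U^N ψ⟫ → 0` for each `φ ∈ (ker D)ᗮ` and each `ψ ∈ 𝓗`. -/
theorem stmt4 {𝓗 : Type*} [NormedAddCommGroup 𝓗] [InnerProductSpace ℂ 𝓗] [CompleteSpace 𝓗]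
    (U : 𝓗 →L[ℂ] 𝓗) (hU : U ∈ unitary (𝓗 →L[ℂ] 𝓗))
    (A : 𝓗 →ₗ.[ℂ] 𝓗) (hA : IsSelfAdjoint A)
    (B : 𝓗 →L[ℂ] 𝓗)
    (hB : ∀ φ : A.domain, ⟪A φ, U (φ : 𝓗)⟫ - ⟪(φ : 𝓗), U (A φ)⟫ = ⟪(φ : 𝓗), B (φ : 𝓗)⟫)
    (D : 𝓗 →L[ℂ] 𝓗) (hDsa : IsSelfAdjoint D)
    (hD : ∀ ψ : 𝓗, Tendsto
      (fun N : ℕ => ((N : ℂ)⁻¹ • ∑ n ∈ Finset.range N, U ^ n * (B * star U) * (star U) ^ n) ψ)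
      atTop (nhds (D ψ)))
    (hdom : ∀ η : ℝ → ℝ, ContDiff ℝ (⊤ : ℕ∞) η → HasCompactSupport η → (0 : ℝ) ∉ tsupport η →
      ∀ φ : A.domain, cfc (fun x : ℝ => x⁻¹ * η x) D (φ : 𝓗) ∈ A.domain) :
    ∀ φ ∈ (LinearMap.ker (D : 𝓗 →ₗ[ℂ] 𝓗))ᗮ, ∀ ψ : 𝓗,
      Tendsto (fun N : ℕ => ⟪φ, (U ^ N) ψ⟫) atTop (nhds 0) := by
  have hstarL : ∀ (W : 𝓗 →L[ℂ] 𝓗) (x y : 𝓗), ⟪star W x, y⟫ = ⟪x, W y⟫ := by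
    intro W x y
    rw [ContinuousLinearMap.star_eq_adjoint, ContinuousLinearMap.adjoint_inner_left]
  have hUUs : ∀ x : 𝓗, U (star U x) = x := by
    intro x
    have h : U * star U = 1 := (Unitary.mem_iff.mp hU).2
    calc U (star U x) = (U * star U) x := rfl
    _ = x := by rw [h]; rfl
  have hB2 : ∀ u v : A.domain, ⟪A u, U (v:𝓗)⟫ - ⟪(u:𝓗), U (A v)⟫ = ⟪(u:𝓗), B (v:𝓗)⟫ := by
    have key : ∀ u v : A.domain,
        (⟪A u, U (v:𝓗)⟫ - ⟪(u:𝓗), U (A v)⟫ - ⟪(u:𝓗), B (v:𝓗)⟫)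
        + (⟪A v, U (u:𝓗)⟫ - ⟪(v:𝓗), U (A u)⟫ - ⟪(v:𝓗), B (u:𝓗)⟫) = 0 := by
      intro u v
      have h0 := hB (u + v)
      have h1 := hB u
      have h2 := hB v
      simp only [LinearPMap.map_add, Submodule.coe_add, map_add, inner_add_left,
        inner_add_right] at h0
      linear_combination h0 - h1 - h2
    intro u v
    have k1 := key u v
    have k2 := key u ((Complex.I : ℂ) • v)
    simp only [LinearPMap.map_smul, Submodule.coe_smul, map_smul, inner_smul_left,
      inner_smul_right, Complex.conj_I] at k2
    linear_combination (1/2 : ℂ) * k1 - (Complex.I/2) * k2 +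
      ((1/2 : ℂ) * (⟪A u, U (v:𝓗)⟫ - ⟪(u:𝓗), U (A v)⟫ - ⟪(u:𝓗), B (v:𝓗)⟫
        - ⟪A v, U (u:𝓗)⟫ + ⟪(v:𝓗), U (A u)⟫ + ⟪(v:𝓗), B (u:𝓗)⟫)) * Complex.I_sq
  -- symmetry
  have hA' : A.adjoint = A := hA
  obtain ⟨hdomEq, happ⟩ := LinearPMap.ext_iff.mp hA'
  have hdense : Dense (A.domain : Set 𝓗) := hA.dense_domain
  have hsym : ∀ u v : A.domain, ⟪A u, (v:𝓗)⟫ = ⟪(u:𝓗), A v⟫ := by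
    intro u v
    have hu : (u:𝓗) ∈ A.adjoint.domain := by rw [hdomEq]; exact u.2
    have hfa := LinearPMap.adjoint_isFormalAdjoint (hT := hdense) ⟨(u:𝓗), hu⟩ v
    rwa [happ (x := (u:𝓗)) (hf := hu) (hg := u.2)] at hfa
  -- U preserves the domain of A
  have hUdom : ∀ v : A.domain, ∃ h : U (v:𝓗) ∈ A.domain,
      A ⟨U (v:𝓗), h⟩ = U (A v) + B (v:𝓗) := by
    intro v
    have hw : ∀ x : A.domain, ⟪U (A v) + B (v:𝓗), (x:𝓗)⟫ = ⟪U (v:𝓗), A x⟫ := by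
      intro x
      have h := hB2 x v
      have h' : ⟪A x, U (v:𝓗)⟫ = ⟪(x:𝓗), U (A v) + B (v:𝓗)⟫ := by
        rw [inner_add_right]; linear_combination h
      calc ⟪U (A v) + B (v:𝓗), (x:𝓗)⟫
          = (starRingEnd ℂ) ⟪(x:𝓗), U (A v) + B (v:𝓗)⟫ := (inner_conj_symm _ _).symm
        _ = (starRingEnd ℂ) ⟪A x, U (v:𝓗)⟫ := by rw [h']
        _ = ⟪U (v:𝓗), A x⟫ := inner_conj_symm _ _
    have hmem' : U (v:𝓗) ∈ A.adjoint.domain :=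
      LinearPMap.mem_adjoint_domain_of_exists _ ⟨_, hw⟩
    have hmem : U (v:𝓗) ∈ A.domain := by simpa only [hdomEq] using hmem'
    refine ⟨hmem, ?_⟩
    have h2 := LinearPMap.adjoint_apply_eq hdense ⟨U (v:𝓗), hmem'⟩ hw
    rw [← happ (x := U (v:𝓗)) (hf := hmem') (hg := hmem)]
    exact h2
  -- star U preserves the domain of A
  have hUsdom : ∀ v : A.domain, ∃ h : star U (v:𝓗) ∈ A.domain,
      A ⟨star U (v:𝓗), h⟩ = star U (A v) - star B (v:𝓗) := by
    intro v
    have hw : ∀ x : A.domain, ⟪star U (A v) - star B (v:𝓗), (x:𝓗)⟫ = ⟪star U (v:𝓗), A x⟫ := by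
      intro x
      have h := hB2 v x
      have e1 : ⟪star U (v:𝓗), A x⟫ = ⟪(v:𝓗), U (A x)⟫ := hstarL U _ _
      have e2 : ⟪star U (A v), (x:𝓗)⟫ = ⟪A v, U (x:𝓗)⟫ := hstarL U _ _
      have e3 : ⟪star B (v:𝓗), (x:𝓗)⟫ = ⟪(v:𝓗), B (x:𝓗)⟫ := hstarL B _ _
      rw [inner_sub_left, e1, e2, e3]
      linear_combination h
    have hmem' : star U (v:𝓗) ∈ A.adjoint.domain :=
      LinearPMap.mem_adjoint_domain_of_exists _ ⟨_, hw⟩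
    have hmem : star U (v:𝓗) ∈ A.domain := by simpa only [hdomEq] using hmem'
    refine ⟨hmem, ?_⟩
    have h2 := LinearPMap.adjoint_apply_eq hdense ⟨star U (v:𝓗), hmem'⟩ hw
    rw [← happ (x := star U (v:𝓗)) (hf := hmem') (hg := hmem)]
    exact h2
  -- iterated membership
  have hmemN : ∀ (N : ℕ) (v : A.domain), ((star U) ^ N) (v:𝓗) ∈ A.domain := by
    intro N
    induction N with
    | zero => intro v; simpa using v.2
    | succ n ih =>
        intro v
        obtain ⟨h, -⟩ := hUsdom ⟨((star U) ^ n) (v:𝓗), ih v⟩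
        have e : ((star U) ^ (n+1)) (v:𝓗) = star U (((star U) ^ n) (v:𝓗)) := by
          rw [pow_succ']; rfl
        rw [e]; exact h
  -- telescoping identity
  have htel : ∀ (N : ℕ) (v : A.domain),
      ∑ n ∈ Finset.range N, (U ^ n * (B * star U) * (star U) ^ n) (v:𝓗)
      = A v - (U ^ N) (A ⟨((star U) ^ N) (v:𝓗), hmemN N v⟩) := by
    intro N v
    induction N with
    | zero =>
        have e : (⟨((star U) ^ 0) (v:𝓗), hmemN 0 v⟩ : A.domain) = v := Subtype.ext (by simp)
        rw [Finset.sum_range_zero, e]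
        simp
    | succ n ih =>
        rw [Finset.sum_range_succ, ih]
        set vn : A.domain := ⟨((star U) ^ n) (v:𝓗), hmemN n v⟩ with hvn
        set vn1 : A.domain := ⟨((star U) ^ (n+1)) (v:𝓗), hmemN (n+1) v⟩ with hvn1
        obtain ⟨hmem, happly⟩ := hUdom vn1
        have he : (⟨U (vn1:𝓗), hmem⟩ : A.domain) = vn := Subtype.ext (by
          show U (((star U) ^ (n+1)) (v:𝓗)) = ((star U) ^ n) (v:𝓗)
          rw [pow_succ']
          exact hUUs _)
        rw [he] at happly
        have hterm : (U ^ n * (B * star U) * (star U) ^ n) (v:𝓗) = (U ^ n) (B (vn1 : 𝓗)) := by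
          have e : star U (((star U) ^ n) (v:𝓗)) = ((star U) ^ (n+1)) (v:𝓗) := by
            rw [pow_succ']; rfl
          simp only [ContinuousLinearMap.mul_apply, e, hvn1]
        have hB' : B (vn1:𝓗) = A vn - U (A vn1) := by rw [happly]; abel
        have hpow : (U ^ n) (U (A vn1)) = (U ^ (n+1)) (A vn1) := by rw [pow_succ]; rfl
        rw [hterm, hB', map_sub, hpow]
        abel
  -- convergence of the telescoped averages
  have hconv : ∀ v : A.domain, Tendsto
      (fun N : ℕ => (N:ℂ)⁻¹ • (A v - (U ^ N) (A ⟨((star U) ^ N) (v:𝓗), hmemN N v⟩)))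
      atTop (nhds (D (v:𝓗))) := by
    intro v
    refine Filter.Tendsto.congr (fun N => ?_) (hD (v:𝓗))
    rw [ContinuousLinearMap.smul_apply, ContinuousLinearMap.sum_apply, htel N v]

  -- unitarity of powers
  have hinnW : ∀ W : 𝓗 →L[ℂ] 𝓗, W ∈ unitary (𝓗 →L[ℂ] 𝓗) → ∀ x y : 𝓗, ⟪W x, W y⟫ = ⟪x, y⟫ := by
    intro W hW x y
    have h1 : star W * W = 1 := (Unitary.mem_iff.mp hW).1
    have h2 : ⟪W x, W y⟫ = ⟪x, star W (W y)⟫ := by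
      rw [← hstarL (star W), star_star]
    rw [h2]
    have h3 : star W (W y) = (star W * W) y := rfl
    rw [h3, h1, ContinuousLinearMap.one_apply]
  have hnormW : ∀ W : 𝓗 →L[ℂ] 𝓗, W ∈ unitary (𝓗 →L[ℂ] 𝓗) → ∀ x : 𝓗, ‖W x‖ = ‖x‖ := by
    intro W hW x
    have h2 : ‖W x‖ ^ 2 = ‖x‖ ^ 2 := by
      rw [← @inner_self_eq_norm_sq ℂ, ← @inner_self_eq_norm_sq ℂ, hinnW W hW x x]
    nlinarith [norm_nonneg (W x), norm_nonneg x]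
  have hUn : ∀ N : ℕ, (U ^ N) ∈ unitary (𝓗 →L[ℂ] 𝓗) := fun N => pow_mem hU N
  have hUsn : ∀ N : ℕ, ((star U) ^ N) ∈ unitary (𝓗 →L[ℂ] 𝓗) :=
    fun N => pow_mem (Unitary.star_mem hU) N
  -- the core limit for vectors in the domain of A
  have hcore : ∀ χ ψ : A.domain,
      Tendsto (fun N : ℕ => ⟪D (χ:𝓗), (U ^ N) (ψ:𝓗)⟫) atTop (nhds 0) := by
    intro χ ψ
    rw [tendsto_zero_iff_norm_tendsto_zero]
    have hbound : ∀ N : ℕ, ‖⟪D (χ:𝓗), (U ^ N) (ψ:𝓗)⟫‖ ≤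
        ‖D (χ:𝓗) - (N:ℂ)⁻¹ • (A χ - (U ^ N) (A ⟨((star U) ^ N) (χ:𝓗), hmemN N χ⟩))‖ * ‖(ψ:𝓗)‖
        + (N:ℝ)⁻¹ * (‖A χ‖ * ‖(ψ:𝓗)‖ + ‖(χ:𝓗)‖ * ‖A ψ‖) := by
      intro N
      set χN : A.domain := ⟨((star U) ^ N) (χ:𝓗), hmemN N χ⟩ with hχN
      set sN : 𝓗 := (N:ℂ)⁻¹ • (A χ - (U ^ N) (A χN)) with hsN
      have e1 : ⟪(U ^ N) (A χN), (U ^ N) (ψ:𝓗)⟫ = ⟪(χN:𝓗), A ψ⟫ := by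
        rw [hinnW _ (hUn N), hsym]
      have e2 : ⟪sN, (U ^ N) (ψ:𝓗)⟫
          = (starRingEnd ℂ) ((N:ℂ)⁻¹) * (⟪A χ, (U ^ N) (ψ:𝓗)⟫ - ⟪(χN:𝓗), A ψ⟫) := by
        rw [hsN, inner_smul_left, inner_sub_left, e1]
      have e0 : ⟪D (χ:𝓗), (U ^ N) (ψ:𝓗)⟫
          = ⟪D (χ:𝓗) - sN, (U ^ N) (ψ:𝓗)⟫ + ⟪sN, (U ^ N) (ψ:𝓗)⟫ := by
        rw [inner_sub_left]; ring
      calc ‖⟪D (χ:𝓗), (U ^ N) (ψ:𝓗)⟫‖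
          ≤ ‖⟪D (χ:𝓗) - sN, (U ^ N) (ψ:𝓗)⟫‖ + ‖⟪sN, (U ^ N) (ψ:𝓗)⟫‖ := by
            rw [e0]; exact norm_add_le _ _
        _ ≤ ‖D (χ:𝓗) - sN‖ * ‖(ψ:𝓗)‖ + (N:ℝ)⁻¹ * (‖A χ‖ * ‖(ψ:𝓗)‖ + ‖(χ:𝓗)‖ * ‖A ψ‖) := by
            apply add_le_add
            · calc ‖⟪D (χ:𝓗) - sN, (U ^ N) (ψ:𝓗)⟫‖
                  ≤ ‖D (χ:𝓗) - sN‖ * ‖(U ^ N) (ψ:𝓗)‖ := norm_inner_le_norm _ _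
                _ = ‖D (χ:𝓗) - sN‖ * ‖(ψ:𝓗)‖ := by rw [hnormW _ (hUn N)]
            · rw [e2, norm_mul, RCLike.norm_conj]
              have hn1 : ‖(N:ℂ)⁻¹‖ = (N:ℝ)⁻¹ := by
                rw [norm_inv, Complex.norm_natCast]
              rw [hn1]
              apply mul_le_mul_of_nonneg_left _ (by positivity)
              calc ‖⟪A χ, (U ^ N) (ψ:𝓗)⟫ - ⟪(χN:𝓗), A ψ⟫‖
                  ≤ ‖⟪A χ, (U ^ N) (ψ:𝓗)⟫‖ + ‖⟪(χN:𝓗), A ψ⟫‖ := norm_sub_le _ _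
                _ ≤ ‖A χ‖ * ‖(ψ:𝓗)‖ + ‖(χ:𝓗)‖ * ‖A ψ‖ := by
                    apply add_le_add
                    · calc ‖⟪A χ, (U ^ N) (ψ:𝓗)⟫‖ ≤ ‖A χ‖ * ‖(U ^ N) (ψ:𝓗)‖ :=
                        norm_inner_le_norm _ _
                      _ = ‖A χ‖ * ‖(ψ:𝓗)‖ := by rw [hnormW _ (hUn N)]
                    · calc ‖⟪(χN:𝓗), A ψ⟫‖ ≤ ‖(χN:𝓗)‖ * ‖A ψ‖ := norm_inner_le_norm _ _
                      _ = ‖(χ:𝓗)‖ * ‖A ψ‖ := by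
                          show ‖((star U) ^ N) (χ:𝓗)‖ * ‖A ψ‖ = _
                          rw [hnormW _ (hUsn N)]
    apply squeeze_zero (fun N => norm_nonneg _) hbound
    have t1 : Tendsto (fun N : ℕ =>
        ‖D (χ:𝓗) - (N:ℂ)⁻¹ • (A χ - (U ^ N) (A ⟨((star U) ^ N) (χ:𝓗), hmemN N χ⟩))‖ * ‖(ψ:𝓗)‖)
        atTop (nhds 0) := by
      have h1 := tendsto_iff_norm_sub_tendsto_zero.mp (hconv χ)
      have h2 : Tendsto (fun N : ℕ =>
          ‖D (χ:𝓗) - (N:ℂ)⁻¹ • (A χ - (U ^ N) (A ⟨((star U) ^ N) (χ:𝓗), hmemN N χ⟩))‖)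
          atTop (nhds 0) := by
        refine h1.congr (fun N => ?_)
        rw [norm_sub_rev]
      simpa using h2.mul_const ‖(ψ:𝓗)‖
    have t2 : Tendsto (fun N : ℕ => (N:ℝ)⁻¹ * (‖A χ‖ * ‖(ψ:𝓗)‖ + ‖(χ:𝓗)‖ * ‖A ψ‖))
        atTop (nhds 0) := by
      simpa using tendsto_inv_atTop_nhds_zero_nat.mul_const
        (‖A χ‖ * ‖(ψ:𝓗)‖ + ‖(χ:𝓗)‖ * ‖A ψ‖)
    simpa using t1.add t2
  -- extend the core limit to all of 𝓗 by density
  have hcore' : ∀ χ ψ : 𝓗, Tendsto (fun N : ℕ => ⟪D χ, (U ^ N) ψ⟫) atTop (nhds 0) := by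
    intro χ ψ
    rw [Metric.tendsto_atTop]
    intro ε hε
    have hM : (0:ℝ) ≤ ‖D‖ := norm_nonneg _
    obtain ⟨χ', hχ'mem, hχ'⟩ := hdense.exists_dist_lt χ
      (show (0:ℝ) < ε/(3*(‖D‖*‖ψ‖+1)) by positivity)
    obtain ⟨ψ', hψ'mem, hψ'⟩ := hdense.exists_dist_lt ψ
      (show (0:ℝ) < ε/(3*(‖D‖*‖χ'‖+1)) by positivity)
    obtain ⟨N₀, hN₀⟩ := Metric.tendsto_atTop.mp (hcore ⟨χ', hχ'mem⟩ ⟨ψ', hψ'mem⟩)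
      (ε/3) (by positivity)
    refine ⟨N₀, fun n hn => ?_⟩
    rw [dist_zero_right]
    have hd1 : ‖χ - χ'‖ * (3*(‖D‖*‖ψ‖+1)) < ε := by
      have h := hχ'
      rw [dist_eq_norm, lt_div_iff₀ (by positivity)] at h
      exact h
    have hd2 : ‖ψ - ψ'‖ * (3*(‖D‖*‖χ'‖+1)) < ε := by
      have h := hψ'
      rw [dist_eq_norm, lt_div_iff₀ (by positivity)] at h
      exact h
    have hsplit : ⟪D χ, (U ^ n) ψ⟫
        = ⟪D (χ - χ'), (U ^ n) ψ⟫ + ⟪D χ', (U ^ n) (ψ - ψ')⟫ + ⟪D χ', (U ^ n) ψ'⟫ := by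
      simp only [map_sub, inner_sub_left, inner_sub_right]
      ring
    have c1 : ‖⟪D (χ - χ'), (U ^ n) ψ⟫‖ ≤ ‖D‖ * ‖χ - χ'‖ * ‖ψ‖ :=
      calc ‖⟪D (χ - χ'), (U ^ n) ψ⟫‖ ≤ ‖D (χ - χ')‖ * ‖(U ^ n) ψ‖ := norm_inner_le_norm _ _
        _ = ‖D (χ - χ')‖ * ‖ψ‖ := by rw [hnormW _ (hUn n)]
        _ ≤ ‖D‖ * ‖χ - χ'‖ * ‖ψ‖ :=
            mul_le_mul_of_nonneg_right (D.le_opNorm _) (norm_nonneg _)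
    have c2 : ‖⟪D χ', (U ^ n) (ψ - ψ')⟫‖ ≤ ‖D‖ * ‖χ'‖ * ‖ψ - ψ'‖ :=
      calc ‖⟪D χ', (U ^ n) (ψ - ψ')⟫‖ ≤ ‖D χ'‖ * ‖(U ^ n) (ψ - ψ')‖ := norm_inner_le_norm _ _
        _ = ‖D χ'‖ * ‖ψ - ψ'‖ := by rw [hnormW _ (hUn n)]
        _ ≤ ‖D‖ * ‖χ'‖ * ‖ψ - ψ'‖ :=
            mul_le_mul_of_nonneg_right (D.le_opNorm _) (norm_nonneg _)
    have b1 : ‖⟪D (χ - χ'), (U ^ n) ψ⟫‖ < ε/3 := by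
      nlinarith [norm_nonneg (χ - χ'), norm_nonneg ψ]
    have b2 : ‖⟪D χ', (U ^ n) (ψ - ψ')⟫‖ < ε/3 := by
      nlinarith [norm_nonneg (ψ - ψ'), norm_nonneg χ']
    have b3 : ‖⟪D χ', (U ^ n) ψ'⟫‖ < ε/3 := by
      have h := hN₀ n hn
      rw [dist_zero_right] at h
      exact h
    calc ‖⟪D χ, (U ^ n) ψ⟫‖
        = ‖⟪D (χ - χ'), (U ^ n) ψ⟫ + ⟪D χ', (U ^ n) (ψ - ψ')⟫ + ⟪D χ', (U ^ n) ψ'⟫‖ := by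
          rw [hsplit]
      _ ≤ ‖⟪D (χ - χ'), (U ^ n) ψ⟫‖ + ‖⟪D χ', (U ^ n) (ψ - ψ')⟫‖ + ‖⟪D χ', (U ^ n) ψ'⟫‖ :=
          norm_add₃_le
      _ < ε := by linarith
  -- the kernel-orthocomplement is the closure of the range
  have hDsym : ∀ x y : 𝓗, ⟪D x, y⟫ = ⟪x, D y⟫ := by
    intro x y
    conv_lhs => rw [← hDsa.star_eq]
    exact hstarL D x y
  have hkr : LinearMap.ker (D : 𝓗 →ₗ[ℂ] 𝓗) = (LinearMap.range (D : 𝓗 →ₗ[ℂ] 𝓗))ᗮ := by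
    ext y
    simp only [LinearMap.mem_ker, Submodule.mem_orthogonal]
    constructor
    · intro h u hu
      rw [LinearMap.mem_range] at hu
      obtain ⟨x, rfl⟩ := hu
      simp only [ContinuousLinearMap.coe_coe] at h ⊢
      rw [hDsym, h, inner_zero_right]
    · intro h
      have h3 : ∀ x : 𝓗, ⟪x, D y⟫ = 0 := by
        intro x
        rw [← hDsym]
        exact h (D x) (LinearMap.mem_range_self _ x)
      exact inner_self_eq_zero.mp (h3 (D y))
  -- final assembly
  intro φ hφ ψ
  have hφcl : φ ∈ closure ((LinearMap.range (D : 𝓗 →ₗ[ℂ] 𝓗) : Submodule ℂ 𝓗) : Set 𝓗) := by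
    rw [← Submodule.topologicalClosure_coe, ← Submodule.orthogonal_orthogonal_eq_closure,
      ← hkr]
    exact hφ
  rw [Metric.tendsto_atTop]
  intro ε hε
  obtain ⟨b, hbmem, hbd⟩ := Metric.mem_closure_iff.mp hφcl (ε/(2*(‖ψ‖+1))) (by positivity)
  rw [SetLike.mem_coe, LinearMap.mem_range] at hbmem
  obtain ⟨χ, rfl⟩ := hbmem
  obtain ⟨N₀, hN₀⟩ := Metric.tendsto_atTop.mp (hcore' χ ψ) (ε/2) (by positivity)
  refine ⟨N₀, fun n hn => ?_⟩
  rw [dist_zero_right]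
  have hsplit : ⟪φ, (U ^ n) ψ⟫ = ⟪φ - D χ, (U ^ n) ψ⟫ + ⟪D χ, (U ^ n) ψ⟫ := by
    rw [inner_sub_left]; ring
  have hd : ‖φ - D χ‖ * (2*(‖ψ‖+1)) < ε := by
    have h := hbd
    rw [dist_eq_norm, lt_div_iff₀ (by positivity)] at h
    exact h
  have b1 : ‖⟪φ - D χ, (U ^ n) ψ⟫‖ < ε/2 := by
    have c1 : ‖⟪φ - D χ, (U ^ n) ψ⟫‖ ≤ ‖φ - D χ‖ * ‖ψ‖ :=
      calc ‖⟪φ - D χ, (U ^ n) ψ⟫‖ ≤ ‖φ - D χ‖ * ‖(U ^ n) ψ‖ := norm_inner_le_norm _ _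
        _ = ‖φ - D χ‖ * ‖ψ‖ := by rw [hnormW _ (hUn n)]
    nlinarith [norm_nonneg (φ - D χ), norm_nonneg ψ]
  have b2 : ‖⟪D χ, (U ^ n) ψ⟫‖ < ε/2 := by
    have h := hN₀ n hn
    rw [dist_zero_right] at h
    exact h
  calc ‖⟪φ, (U ^ n) ψ⟫‖ = ‖⟪φ - D χ, (U ^ n) ψ⟫ + ⟪D χ, (U ^ n) ψ⟫‖ := by rw [hsplit]
    _ ≤ ‖⟪φ - D χ, (U ^ n) ψ⟫‖ + ‖⟪D χ, (U ^ n) ψ⟫‖ := norm_add_le _ _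
    _ < ε := by linarith
end

section
/- Under the hypotheses of the strong mixing theorem for discrete flows (U unitary, A self-adjoint, U ∈ C^1(A), D := s-lim of the Birkhoff averages of [A,U]U^{-1} exists, and D^{-1}η(D) preserves dom(A) for all η ∈ C_c^∞(ℝ∖{0})), the restriction of U to ker(D)^⊥ has purely continuous spectrum, i.e. U has no eigenvector in ker(D)^⊥ ∖ {0}. -/
open scoped ComplexInnerProductSpace
open Filter Topology

section Aux

variable {H : Type*} [NormedAddCommGroup H] [InnerProductSpace ℂ H] [CompleteSpace H]

namespace Stmt5Aux

lemma sa_apply_adjoint {A : H →ₗ.[ℂ] H} (hA : IsSelfAdjoint A)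
    (x : A.domain) (hx : (x : H) ∈ A.adjoint.domain) :
    A.adjoint ⟨(x : H), hx⟩ = A x := by
  have hA' : A.adjoint = A := hA
  have hle : A.adjoint ≤ A := le_of_eq hA'
  exact hle.2 (x := ⟨(x : H), hx⟩) (y := x) rfl

lemma sa_mem_adjoint_domain {A : H →ₗ.[ℂ] H} (hA : IsSelfAdjoint A)
    (x : A.domain) : (x : H) ∈ A.adjoint.domain := by
  have hA' : A.adjoint = A := hA
  have : A.domain = A.adjoint.domain := by rw [hA']
  exact this ▸ x.2

lemma sa_symm {A : H →ₗ.[ℂ] H} (hA : IsSelfAdjoint A) (x y : A.domain) :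
    ⟪A x, (y : H)⟫ = ⟪(x : H), A y⟫ := by
  have h := LinearPMap.adjoint_isFormalAdjoint (T := A) hA.dense_domain
  have h2 := h ⟨(x : H), sa_mem_adjoint_domain hA x⟩ y
  rwa [sa_apply_adjoint hA x] at h2

lemma sa_mem {A : H →ₗ.[ℂ] H} (hA : IsSelfAdjoint A) {ξ w : H}
    (h : ∀ ψ : A.domain, ⟪w, (ψ : H)⟫ = ⟪ξ, A ψ⟫) :
    ∃ hm : ξ ∈ A.domain, A ⟨ξ, hm⟩ = w := by
  have hm' : ξ ∈ A.adjoint.domain :=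
    LinearPMap.mem_adjoint_domain_of_exists (T := A) ξ ⟨w, h⟩
  have hA' : A.adjoint = A := hA
  have hdom : A.adjoint.domain = A.domain := by rw [hA']
  refine ⟨hdom ▸ hm', ?_⟩
  have hval : A.adjoint ⟨ξ, hm'⟩ = w :=
    LinearPMap.adjoint_apply_eq hA.dense_domain ⟨ξ, hm'⟩ fun x => h x
  rw [← hval]
  exact (sa_apply_adjoint hA ⟨ξ, hdom ▸ hm'⟩ hm').symm

lemma sa_inner_self_conj {A : H →ₗ.[ℂ] H} (hA : IsSelfAdjoint A) (x : A.domain) :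
    (starRingEnd ℂ) ⟪(x : H), A x⟫ = ⟪(x : H), A x⟫ := by
  rw [inner_conj_symm, sa_symm hA]

end Stmt5Aux

end Aux

section Aux2

variable {H : Type*} [NormedAddCommGroup H] [InnerProductSpace ℂ H] [CompleteSpace H]

namespace Stmt5Aux

variable {U : H →L[ℂ] H} {A : H →ₗ.[ℂ] H} {B : H →L[ℂ] H}

lemma inner_star_left (V : H →L[ℂ] H) (x y : H) : ⟪star V x, y⟫ = ⟪x, V y⟫ := by
  rw [ContinuousLinearMap.star_eq_adjoint, ContinuousLinearMap.adjoint_inner_left]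

lemma inner_star_right (V : H →L[ℂ] H) (x y : H) : ⟪x, star V y⟫ = ⟪V x, y⟫ := by
  rw [ContinuousLinearMap.star_eq_adjoint, ContinuousLinearMap.adjoint_inner_right]

lemma pol (hB : ∀ φ : A.domain, ⟪A φ, U (φ : H)⟫ - ⟪(φ : H), U (A φ)⟫ = ⟪(φ : H), B (φ : H)⟫)
    (x y : A.domain) :
    ⟪A x, U (y : H)⟫ - ⟪(x : H), U (A y)⟫ = ⟪(x : H), B (y : H)⟫ := by
  set f : A.domain → A.domain → ℂ :=
    fun x y => ⟪A x, U (y : H)⟫ - ⟪(x : H), U (A y)⟫ - ⟪(x : H), B (y : H)⟫ with hf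
  have hdiag : ∀ w : A.domain, f w w = 0 := fun w => by
    simp only [hf]; rw [hB w]; ring
  have hexp : ∀ (c : ℂ) (x y : A.domain), f (x + c • y) (x + c • y)
      = f x x + c * f x y + (starRingEnd ℂ) c * f y x
        + c * (starRingEnd ℂ) c * f y y := by
    intro c x y
    simp only [hf, A.map_add, A.map_smul, Submodule.coe_add, Submodule.coe_smul,
      map_add, map_smul, inner_add_left, inner_add_right, inner_smul_left,
      inner_smul_right]
    ring
  have h1 : f x y + f y x = 0 := by
    have := hexp 1 x y
    rw [hdiag, hdiag, hdiag] at this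
    simpa using this.symm
  have h2 : f x y - f y x = 0 := by
    have := hexp Complex.I x y
    rw [hdiag, hdiag, hdiag] at this
    simp only [Complex.conj_I] at this
    have h3 : Complex.I * f x y + (-Complex.I) * f y x = 0 := by
      rw [show Complex.I * f x y + (-Complex.I) * f y x
        = 0 + Complex.I * f x y + (-Complex.I) * f y x + Complex.I * (-Complex.I) * 0 by ring]
      exact this.symm
    have := congrArg (fun w => (-Complex.I) * w) h3
    simp only [mul_zero] at this
    rw [← this]
    ring_nf
    rw [Complex.I_sq]
    ring
  have h0 : f x y = 0 := by linear_combination (h1 + h2) / 2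
  simp only [hf] at h0
  linear_combination h0

lemma memU (hA : IsSelfAdjoint A)
    (hB : ∀ φ : A.domain, ⟪A φ, U (φ : H)⟫ - ⟪(φ : H), U (A φ)⟫ = ⟪(φ : H), B (φ : H)⟫)
    (x : A.domain) :
    ∃ hm : U (x : H) ∈ A.domain, A ⟨U (x : H), hm⟩ = U (A x) + B (x : H) := by
  apply sa_mem hA
  intro ψ
  have hp := pol hB ψ x
  have : ⟪(ψ : H), U (A x)⟫ + ⟪(ψ : H), B (x : H)⟫ = ⟪A ψ, U (x : H)⟫ := by
    rw [← hp]; ring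
  calc ⟪U (A x) + B (x : H), (ψ : H)⟫
      = (starRingEnd ℂ) (⟪(ψ : H), U (A x)⟫ + ⟪(ψ : H), B (x : H)⟫) := by
        rw [map_add, inner_conj_symm, inner_conj_symm, inner_add_left]
    _ = (starRingEnd ℂ) ⟪A ψ, U (x : H)⟫ := by rw [this]
    _ = ⟪U (x : H), A ψ⟫ := by rw [inner_conj_symm]

lemma memUstar (hA : IsSelfAdjoint A)
    (hB : ∀ φ : A.domain, ⟪A φ, U (φ : H)⟫ - ⟪(φ : H), U (A φ)⟫ = ⟪(φ : H), B (φ : H)⟫)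
    (x : A.domain) : star U (x : H) ∈ A.domain := by
  refine (sa_mem hA (w := star U (A x) - star B (x : H)) ?_).1
  intro ψ
  have hp := pol hB x ψ
  have h1 : ⟪star U (x : H), A ψ⟫ = ⟪(x : H), U (A ψ)⟫ := inner_star_left U _ _
  have h2 : ⟪(x : H), U (A ψ)⟫ = ⟪A x, U (ψ : H)⟫ - ⟪(x : H), B (ψ : H)⟫ := by
    rw [← hp]; ring
  rw [h1, h2, ← inner_star_left U, ← inner_star_left B, ← inner_sub_left]

lemma AU_decomp (hU : U ∈ unitary (H →L[ℂ] H)) (hA : IsSelfAdjoint A)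
    (hB : ∀ φ : A.domain, ⟪A φ, U (φ : H)⟫ - ⟪(φ : H), U (A φ)⟫ = ⟪(φ : H), B (φ : H)⟫)
    (x : A.domain) (hm : star U (x : H) ∈ A.domain) :
    A x = U (A ⟨star U (x : H), hm⟩) + B (star U (x : H)) := by
  obtain ⟨hm2, hval⟩ := memU hA hB ⟨star U (x : H), hm⟩
  have hco : U (star U (x : H)) = (x : H) := by
    have := congrArg (fun (V : H →L[ℂ] H) => V (x : H)) hU.2
    simpa [ContinuousLinearMap.mul_apply] using this
  have : A ⟨U (star U (x : H)), hm2⟩ = A x := by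
    congr 1
    exact Subtype.ext hco
  rw [← this, hval]

end Stmt5Aux

end Aux2

section Aux3

set_option linter.unusedSectionVars false

variable {H : Type*} [NormedAddCommGroup H] [InnerProductSpace ℂ H] [CompleteSpace H]

namespace Stmt5Aux

variable {A : H →ₗ.[ℂ] H}

lemma resolvent (hA : IsSelfAdjoint A) (c : ℂ) (hc0 : c ≠ 0)
    (hconjc : (starRingEnd ℂ) c = -c) :
    ∃ R : H →ₗ[ℂ] H,
      (∀ y : H, ∃ hm : R y ∈ A.domain,
        R y + c • A ⟨R y, hm⟩ = y) ∧
      (∀ y : H, ‖R y‖ ≤ ‖y‖) ∧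
      (∀ x : A.domain, R ((x : H) + c • A x) = (x : H)) := by
  set T : A.domain →ₗ[ℂ] H := A.domain.subtype + c • A.toFun with hT
  have hT_apply : ∀ x : A.domain, T x = (x : H) + c • A x := fun x => rfl
  -- norm identity
  have hnorm_sq : ∀ x : A.domain, ‖T x‖ ^ 2 = ‖(x : H)‖ ^ 2 + ‖c • A x‖ ^ 2 := by
    intro x
    rw [hT_apply, norm_add_sq (𝕜 := ℂ)]
    have hre : RCLike.re ⟪(x : H), c • A x⟫ = 0 := by
      rw [inner_smul_right]
      have hw : ((starRingEnd ℂ) ⟪(x : H), A x⟫) = ⟪(x : H), A x⟫ :=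
        sa_inner_self_conj hA x
      have him : (⟪(x : H), A x⟫ : ℂ).im = 0 := by
        have h := congrArg Complex.im hw
        rw [Complex.conj_im] at h
        linarith
      have hcre : c.re = 0 := by
        have h := congrArg Complex.re hconjc
        simp only [Complex.conj_re, Complex.neg_re] at h
        linarith
      simp [RCLike.re_to_complex, Complex.mul_re, him, hcre]
    rw [hre]
    ring
  have h_le1 : ∀ x : A.domain, ‖(x : H)‖ ≤ ‖T x‖ := by
    intro x
    have h2 : ‖(x : H)‖ ^ 2 ≤ ‖T x‖ ^ 2 := by
      rw [hnorm_sq x]; exact le_add_of_nonneg_right (by positivity)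
    have := Real.sqrt_le_sqrt h2
    rwa [Real.sqrt_sq (norm_nonneg _), Real.sqrt_sq (norm_nonneg _)] at this
  have h_le2 : ∀ x : A.domain, ‖c‖ * ‖A x‖ ≤ ‖T x‖ := by
    intro x
    have h2 : ‖c • A x‖ ^ 2 ≤ ‖T x‖ ^ 2 := by
      rw [hnorm_sq x]; exact le_add_of_nonneg_left (by positivity)
    have := Real.sqrt_le_sqrt h2
    rwa [Real.sqrt_sq (norm_nonneg _), Real.sqrt_sq (norm_nonneg _),
      norm_smul] at this
  have hinj : Function.Injective T := by
    intro a b hab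
    have h0 : T (a - b) = 0 := by rw [map_sub, hab, sub_self]
    have := h_le1 (a - b)
    rw [h0, norm_zero] at this
    have : ((a - b : A.domain) : H) = 0 := norm_le_zero_iff.mp this
    have : (a - b : A.domain) = 0 := by exact_mod_cast this
    exact sub_eq_zero.mp this
  -- closed range
  have hclosed : IsClosed ((LinearMap.range T : Submodule ℂ H) : Set H) := by
    apply IsSeqClosed.isClosed
    intro u y hu huy
    choose x hx using hu
    have hdistT : ∀ m n : ℕ, ‖T (x m - x n)‖ = dist (u m) (u n) := by
      intro m n
      rw [map_sub, hx m, hx n, dist_eq_norm]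
    have hcau := Metric.cauchySeq_iff.mp huy.cauchySeq
    have hcau1 : CauchySeq (fun n => ((x n : H))) := by
      rw [Metric.cauchySeq_iff]
      intro ε hε
      obtain ⟨N, hN⟩ := hcau ε hε
      refine ⟨N, fun m hm n hn => ?_⟩
      have hb : dist ((x m : H)) ((x n : H)) ≤ dist (u m) (u n) := by
        rw [dist_eq_norm, ← hdistT m n]
        calc ‖(x m : H) - (x n : H)‖ = ‖((x m - x n : A.domain) : H)‖ := by push_cast; ring_nf
          _ ≤ ‖T (x m - x n)‖ := h_le1 _
      exact lt_of_le_of_lt hb (hN m hm n hn)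
    have hcau2 : CauchySeq (fun n => A (x n)) := by
      rw [Metric.cauchySeq_iff]
      intro ε hε
      have hcpos : (0 : ℝ) < ‖c‖ := norm_pos_iff.mpr hc0
      obtain ⟨N, hN⟩ := hcau (ε * ‖c‖) (mul_pos hε hcpos)
      refine ⟨N, fun m hm n hn => ?_⟩
      have hb : ‖c‖ * dist (A (x m)) (A (x n)) ≤ dist (u m) (u n) := by
        rw [dist_eq_norm, ← hdistT m n, ← A.map_sub]
        exact h_le2 _
      have := lt_of_le_of_lt hb (hN m hm n hn)
      nlinarith [dist_nonneg (x := A (x m)) (y := A (x n))]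
    obtain ⟨p, hp⟩ := cauchySeq_tendsto_of_complete hcau1
    obtain ⟨v, hv⟩ := cauchySeq_tendsto_of_complete hcau2
    obtain ⟨hmp, hAp⟩ := sa_mem hA (ξ := p) (w := v) (by
      intro ψ
      have t1 : Tendsto (fun n => ⟪A (x n), (ψ : H)⟫) atTop (𝓝 ⟪v, (ψ : H)⟫) :=
        hv.inner tendsto_const_nhds
      have t2 : Tendsto (fun n => ⟪((x n : H)), A ψ⟫) atTop (𝓝 ⟪p, A ψ⟫) :=
        hp.inner tendsto_const_nhds
      have heq : (fun n => ⟪A (x n), (ψ : H)⟫) = fun n => ⟪((x n : H)), A ψ⟫ := by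
        funext n; exact sa_symm hA (x n) ψ
      rw [heq] at t1
      exact tendsto_nhds_unique t1 t2)
    refine ⟨⟨p, hmp⟩, ?_⟩
    have hTo : Tendsto u atTop (𝓝 (p + c • v)) := by
      have hue : u = fun n => ((x n : H)) + c • A (x n) := funext fun n => by
        rw [← hx n, hT_apply]
      rw [hue]
      exact hp.add (hv.const_smul c)
    have hy2 : y = p + c • v := tendsto_nhds_unique huy hTo
    rw [hT_apply, hy2]
    simp [hAp]
  -- dense range
  have horth : (LinearMap.range T)ᗮ = ⊥ := by
    rw [Submodule.eq_bot_iff]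
    intro y hy
    have hy' : ∀ x : A.domain, ⟪T x, y⟫ = 0 := fun x =>
      (Submodule.mem_orthogonal _ y).mp hy (T x) (LinearMap.mem_range_self T x)
    have hkey : ∀ x : A.domain, c * ⟪A x, y⟫ = ⟪(x : H), y⟫ := by
      intro x
      have := hy' x
      rw [hT_apply, inner_add_left, inner_smul_left, hconjc] at this
      linear_combination -this
    obtain ⟨hmy, hAy⟩ := sa_mem hA (ξ := y) (w := c⁻¹ • y) (by
      intro ψ
      have h2 : ⟪A ψ, y⟫ = c⁻¹ * ⟪(ψ : H), y⟫ := by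
        field_simp
        linear_combination hkey ψ
      have h3 : ⟪y, A ψ⟫ = (starRingEnd ℂ) ⟪A ψ, y⟫ := (inner_conj_symm _ _).symm
      rw [h3, h2, map_mul, map_inv₀, hconjc, inner_conj_symm, inner_smul_left,
        map_inv₀, hconjc]
    )
    have hself : ⟪y, A ⟨y, hmy⟩⟫ = c⁻¹ * ⟪y, y⟫ := by
      rw [hAy, inner_smul_right]
    have hconj := sa_inner_self_conj hA ⟨y, hmy⟩
    rw [hself, map_mul, inner_conj_symm, map_inv₀, hconjc] at hconj
    have h2 : (2 : ℂ) * (c⁻¹ * ⟪y, y⟫) = 0 := by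
      have hcc : (-c)⁻¹ * ⟪y, y⟫ = c⁻¹ * ⟪y, y⟫ := hconj
      rw [inv_neg] at hcc
      linear_combination -hcc
    have h3 : ⟪y, y⟫ = (0 : ℂ) := by
      rcases mul_eq_zero.mp h2 with h | h
      · exact absurd h two_ne_zero
      · rcases mul_eq_zero.mp h with h' | h'
        · exact absurd h' (inv_ne_zero hc0)
        · exact h'
    exact inner_self_eq_zero.mp h3
  have htop : LinearMap.range T = ⊤ := by
    haveI : CompleteSpace (LinearMap.range T : Submodule ℂ H) :=
      hclosed.completeSpace_coe
    exact Submodule.orthogonal_eq_bot_iff.mp horth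
  have hsurj : Function.Surjective T := LinearMap.range_eq_top.mp htop
  set e := LinearEquiv.ofBijective T ⟨hinj, hsurj⟩ with he
  refine ⟨A.domain.subtype ∘ₗ e.symm.toLinearMap, ?_, ?_, ?_⟩
  · intro y
    have hmem : (e.symm y : H) ∈ A.domain := (e.symm y).2
    refine ⟨hmem, ?_⟩
    have hsub : (⟨(A.domain.subtype ∘ₗ e.symm.toLinearMap) y, hmem⟩ : A.domain) = e.symm y :=
      Subtype.ext rfl
    rw [hsub]
    show ((e.symm y : A.domain) : H) + c • A (e.symm y) = y
    rw [← hT_apply]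
    exact e.apply_symm_apply y
  · intro y
    have h1 : (A.domain.subtype ∘ₗ e.symm.toLinearMap) y = ((e.symm y : A.domain) : H) := rfl
    rw [h1]
    calc ‖((e.symm y : A.domain) : H)‖ ≤ ‖T (e.symm y)‖ := h_le1 _
      _ = ‖e (e.symm y)‖ := rfl
      _ = ‖y‖ := by rw [e.apply_symm_apply]
  · intro x
    have h1 : (x : H) + c • A x = T x := (hT_apply x).symm
    rw [h1]
    have : T x = e x := rfl
    rw [this]
    have h2 : (A.domain.subtype ∘ₗ e.symm.toLinearMap) (e x) = ((e.symm (e x) : A.domain) : H) := rfl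
    rw [h2, e.symm_apply_apply]

end Stmt5Aux

end Aux3

section Aux4

set_option linter.unusedSectionVars false

variable {H : Type*} [NormedAddCommGroup H] [InnerProductSpace ℂ H] [CompleteSpace H]

namespace Stmt5Aux

variable {U : H →L[ℂ] H}

lemma unitary_star_apply (hU : U ∈ unitary (H →L[ℂ] H)) (w : H) : star U (U w) = w := by
  have := congrArg (fun (V : H →L[ℂ] H) => V w) hU.1
  simpa [ContinuousLinearMap.mul_apply] using this

lemma unitary_apply_star (hU : U ∈ unitary (H →L[ℂ] H)) (w : H) : U (star U w) = w := by
  have := congrArg (fun (V : H →L[ℂ] H) => V w) hU.2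
  simpa [ContinuousLinearMap.mul_apply] using this

lemma unitary_norm_apply (hU : U ∈ unitary (H →L[ℂ] H)) (w : H) : ‖U w‖ = ‖w‖ := by
  have h1 : ⟪U w, U w⟫ = ⟪w, w⟫ := by
    rw [← inner_star_left U (U w) w, unitary_star_apply hU]
  have h3 : ‖U w‖ ^ 2 = ‖w‖ ^ 2 := by
    rw [← inner_self_eq_norm_sq (𝕜 := ℂ), ← inner_self_eq_norm_sq (𝕜 := ℂ), h1]
  nlinarith [norm_nonneg (U w), norm_nonneg w]

lemma star_norm_apply (hU : U ∈ unitary (H →L[ℂ] H)) (w : H) : ‖star U w‖ = ‖w‖ := by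
  conv_rhs => rw [← unitary_apply_star hU w]
  rw [unitary_norm_apply hU]

lemma pow_apply_eig (V : H →L[ℂ] H) {w : H} {a : ℂ} (h : V w = a • w) (n : ℕ) :
    (V ^ n) w = a ^ n • w := by
  induction n with
  | zero => simp
  | succ n ih =>
    rw [pow_succ', ContinuousLinearMap.mul_apply, ih, map_smul, h, smul_smul, ← pow_succ]

lemma star_eig (hU : U ∈ unitary (H →L[ℂ] H)) {z zb : ℂ} (hzbz : zb * z = 1) {w : H}
    (h : U w = z • w) : star U w = zb • w := by
  have h1 : star U (U w) = w := unitary_star_apply hU w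
  rw [h, map_smul] at h1
  calc star U w = (zb * z) • star U w := by rw [hzbz, one_smul]
    _ = zb • (z • star U w) := by rw [mul_smul]
    _ = zb • w := by rw [h1]

end Stmt5Aux

end Aux4

/-- Under the hypotheses of the strong mixing theorem for discrete flows
(`U` unitary, `A` self-adjoint, `U ∈ C¹(A)` with bounded commutator `B`, the strong limit `D`
of the Birkhoff averages of `[A,U]U⁻¹` exists, and `D⁻¹η(D)` preserves `dom A` for all
`η ∈ C_c^∞(ℝ \ {0})`), the restriction of `U` to `(ker D)ᗮ` has purely continuous spectrum,
i.e. `U` has no eigenvector in `(ker D)ᗮ \ {0}`. -/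
theorem stmt5 {𝓗 : Type*} [NormedAddCommGroup 𝓗] [InnerProductSpace ℂ 𝓗] [CompleteSpace 𝓗]
    (U : 𝓗 →L[ℂ] 𝓗) (hU : U ∈ unitary (𝓗 →L[ℂ] 𝓗))
    (A : 𝓗 →ₗ.[ℂ] 𝓗) (hA : IsSelfAdjoint A)
    (B : 𝓗 →L[ℂ] 𝓗)
    (hB : ∀ φ : A.domain, ⟪A φ, U (φ : 𝓗)⟫ - ⟪(φ : 𝓗), U (A φ)⟫ = ⟪(φ : 𝓗), B (φ : 𝓗)⟫)
    (D : 𝓗 →L[ℂ] 𝓗) (hDsa : IsSelfAdjoint D)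
    (hD : ∀ ψ : 𝓗, Tendsto
      (fun N : ℕ => ((N : ℂ)⁻¹ • ∑ n ∈ Finset.range N, U ^ n * (B * star U) * (star U) ^ n) ψ)
      atTop (nhds (D ψ)))
    (hdom : ∀ η : ℝ → ℝ, ContDiff ℝ (⊤ : ℕ∞) η → HasCompactSupport η → (0 : ℝ) ∉ tsupport η →
      ∀ φ : A.domain, cfc (fun x : ℝ => x⁻¹ * η x) D (φ : 𝓗) ∈ A.domain) :
    ∀ φ ∈ (LinearMap.ker (D : 𝓗 →ₗ[ℂ] 𝓗))ᗮ, φ ≠ 0 → ∀ z : ℂ, U φ ≠ z • φ := by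
  intro φ hφmem hφ0 z hz
  open Stmt5Aux in
  -- basic facts about the eigenvalue
  have hz1 : ‖z‖ = 1 := by
    have h1 : ‖U φ‖ = ‖φ‖ := unitary_norm_apply hU φ
    rw [hz, norm_smul] at h1
    have hφn : ‖φ‖ ≠ 0 := norm_ne_zero_iff.mpr hφ0
    field_simp at h1
    tauto
  set zb : ℂ := (starRingEnd ℂ) z with hzb
  have hzzb : z * zb = 1 := by
    rw [hzb, Complex.mul_conj, Complex.normSq_eq_norm_sq, hz1]
    norm_num
  have hzbz : zb * z = 1 := by rw [mul_comm]; exact hzzb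
  have hconjzb : (starRingEnd ℂ) zb = z := by rw [hzb, Complex.conj_conj]
  have hUs : star U φ = zb • φ := star_eig hU hzbz hz
  -- the averaged vectors
  set w : ℕ → 𝓗 := fun n => zb ^ (n + 1) • (U ^ n) (B φ) with hw
  have havg : ∀ N : ℕ,
      (((N : ℂ)⁻¹ • ∑ n ∈ Finset.range N, U ^ n * (B * star U) * (star U) ^ n) φ)
      = (N : ℂ)⁻¹ • ∑ n ∈ Finset.range N, w n := by
    intro N
    rw [ContinuousLinearMap.smul_apply, ContinuousLinearMap.sum_apply]
    congr 1
    refine Finset.sum_congr rfl fun n _ => ?_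
    show (U ^ n) ((B * star U) (((star U) ^ n) φ)) = zb ^ (n + 1) • (U ^ n) (B φ)
    rw [ContinuousLinearMap.mul_apply, pow_apply_eig (star U) hUs n, map_smul, hUs,
      smul_smul, map_smul, map_smul, ← pow_succ]
  have hDlim : Tendsto (fun N : ℕ => (N : ℂ)⁻¹ • ∑ n ∈ Finset.range N, w n)
      atTop (𝓝 (D φ)) := by
    have h0 := hD φ
    rwa [show (fun N : ℕ =>
        (((N : ℂ)⁻¹ • ∑ n ∈ Finset.range N, U ^ n * (B * star U) * (star U) ^ n) φ))
      = fun N : ℕ => (N : ℂ)⁻¹ • ∑ n ∈ Finset.range N, w n from funext havg] at h0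
  -- D φ is an eigenvector of U for the eigenvalue z
  have hwU : ∀ n, U (w n) = z • w (n + 1) := by
    intro n
    show U (zb ^ (n + 1) • (U ^ n) (B φ)) = z • (zb ^ (n + 1 + 1) • (U ^ (n + 1)) (B φ))
    rw [map_smul, smul_smul]
    have h1 : U ((U ^ n) (B φ)) = (U ^ (n + 1)) (B φ) := by
      rw [pow_succ', ContinuousLinearMap.mul_apply]
    rw [h1]
    congr 1
    calc zb ^ (n + 1) = (z * zb) * zb ^ (n + 1) := by rw [hzzb, one_mul]
      _ = z * zb ^ (n + 1 + 1) := by ring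
  have hwnorm : ∀ n, ‖w n‖ ≤ ‖B φ‖ := by
    intro n
    show ‖zb ^ (n + 1) • (U ^ n) (B φ)‖ ≤ ‖B φ‖
    rw [norm_smul, norm_pow]
    have h1 : ‖zb‖ = 1 := by rw [hzb, RCLike.norm_conj, hz1]
    have h2 : ‖(U ^ n) (B φ)‖ = ‖B φ‖ := unitary_norm_apply (pow_mem hU n) (B φ)
    rw [h1, h2, one_pow, one_mul]
  have hUDz : U (D φ) = z • D φ := by
    have hUD : Tendsto (fun N : ℕ => U ((N : ℂ)⁻¹ • ∑ n ∈ Finset.range N, w n))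
        atTop (𝓝 (U (D φ))) := (U.continuous.tendsto _).comp hDlim
    have hshift : ∀ N : ℕ, U ((N : ℂ)⁻¹ • ∑ n ∈ Finset.range N, w n)
        = z • ((N : ℂ)⁻¹ • ∑ n ∈ Finset.range N, w n)
          + (N : ℂ)⁻¹ • (z • (w N - w 0)) := by
      intro N
      have hsum : ∑ n ∈ Finset.range N, w (n + 1)
          = ∑ n ∈ Finset.range N, w n + w N - w 0 := by
        have h1 := Finset.sum_range_succ' w N
        have h2 := Finset.sum_range_succ w N
        rw [eq_sub_iff_add_eq]
        exact h1.symm.trans h2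
      calc U ((N : ℂ)⁻¹ • ∑ n ∈ Finset.range N, w n)
          = (N : ℂ)⁻¹ • ∑ n ∈ Finset.range N, U (w n) := by rw [map_smul, map_sum]
        _ = (N : ℂ)⁻¹ • ∑ n ∈ Finset.range N, z • w (n + 1) := by
            congr 1
            exact Finset.sum_congr rfl fun n _ => hwU n
        _ = (N : ℂ)⁻¹ • (z • (∑ n ∈ Finset.range N, w n + w N - w 0)) := by
            rw [← Finset.smul_sum, hsum]
        _ = z • ((N : ℂ)⁻¹ • ∑ n ∈ Finset.range N, w n)
            + (N : ℂ)⁻¹ • (z • (w N - w 0)) := by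
            module
    have herr : Tendsto (fun N : ℕ => (N : ℂ)⁻¹ • (z • (w N - w 0))) atTop (𝓝 0) := by
      apply squeeze_zero_norm (a := fun N : ℕ => (2 * ‖B φ‖) / N)
      · intro N
        rw [norm_smul, norm_smul, hz1, one_mul]
        have h1 : ‖w N - w 0‖ ≤ 2 * ‖B φ‖ := by
          calc ‖w N - w 0‖ ≤ ‖w N‖ + ‖w 0‖ := norm_sub_le _ _
            _ ≤ 2 * ‖B φ‖ := by linarith [hwnorm N, hwnorm 0]
        have h2 : ‖((N : ℂ))⁻¹‖ = (N : ℝ)⁻¹ := by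
          rw [norm_inv, Complex.norm_natCast]
        rw [h2, div_eq_inv_mul]
        apply mul_le_mul_of_nonneg_left h1
        positivity
      · exact tendsto_const_div_atTop_nhds_zero_nat _
    have hconv : Tendsto (fun N : ℕ => U ((N : ℂ)⁻¹ • ∑ n ∈ Finset.range N, w n))
        atTop (𝓝 (z • D φ + 0)) := by
      rw [show (fun N : ℕ => U ((N : ℂ)⁻¹ • ∑ n ∈ Finset.range N, w n))
        = fun N : ℕ => z • ((N : ℂ)⁻¹ • ∑ n ∈ Finset.range N, w n)
          + (N : ℂ)⁻¹ • (z • (w N - w 0)) from funext hshift]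
      exact (hDlim.const_smul z).add herr
    have := tendsto_nhds_unique hUD hconv
    rwa [add_zero] at this
  have hUsD : star U (D φ) = zb • D φ := star_eig hU hzbz hUDz
  -- the quadratic identity
  have hC : ⟪D φ, D φ⟫ = zb * ⟪D φ, B φ⟫ := by
    have hterm : ∀ N : ℕ, 1 ≤ N →
        ⟪D φ, (N : ℂ)⁻¹ • ∑ n ∈ Finset.range N, w n⟫ = zb * ⟪D φ, B φ⟫ := by
      intro N hN
      rw [inner_smul_right, inner_sum]
      have hterm1 : ∀ n ∈ Finset.range N, ⟪D φ, w n⟫ = zb * ⟪D φ, B φ⟫ := by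
        intro n _
        show ⟪D φ, zb ^ (n + 1) • (U ^ n) (B φ)⟫ = zb * ⟪D φ, B φ⟫
        rw [inner_smul_right]
        have h1 : ⟪D φ, (U ^ n) (B φ)⟫ = ⟪((star U) ^ n) (D φ), B φ⟫ := by
          rw [← star_pow, inner_star_left]
        rw [h1, pow_apply_eig (star U) hUsD n, inner_smul_left, map_pow, hconjzb]
        have h2 : zb ^ (n + 1) * z ^ n = zb := by
          calc zb ^ (n + 1) * z ^ n = zb * ((zb * z) ^ n) := by rw [mul_pow]; ring
            _ = zb := by rw [hzbz, one_pow, mul_one]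
        rw [← mul_assoc, h2]
      rw [Finset.sum_congr rfl hterm1, Finset.sum_const, Finset.card_range, nsmul_eq_mul]
      have hN0 : (N : ℂ) ≠ 0 := Nat.cast_ne_zero.mpr (by omega)
      field_simp
    have hlim1 : Tendsto (fun N : ℕ => ⟪D φ, (N : ℂ)⁻¹ • ∑ n ∈ Finset.range N, w n⟫)
        atTop (𝓝 ⟪D φ, D φ⟫) := tendsto_const_nhds.inner hDlim
    have hlim2 : Tendsto (fun N : ℕ => ⟪D φ, (N : ℂ)⁻¹ • ∑ n ∈ Finset.range N, w n⟫)
        atTop (𝓝 (zb * ⟪D φ, B φ⟫)) := by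
      rw [Filter.tendsto_congr' (eventually_atTop.mpr ⟨1, hterm⟩)]
      exact tendsto_const_nhds
    exact tendsto_nhds_unique hlim1 hlim2
  -- the regularized virial theorem
  have hvir : ⟪D φ, B (star U φ)⟫ = 0 := by
    set χ := D φ with hχ
    set c : ℕ → ℂ := fun k => (((1 : ℝ) / (k + 1) : ℝ) : ℂ) * Complex.I with hcdef
    have hc0 : ∀ k : ℕ, c k ≠ 0 := by
      intro k
      apply mul_ne_zero _ Complex.I_ne_zero
      rw [Complex.ofReal_ne_zero]
      positivity
    have hconjc : ∀ k : ℕ, (starRingEnd ℂ) (c k) = -(c k) := by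
      intro k
      simp [hcdef, Complex.conj_I, Complex.conj_ofReal, mul_comm]
    have hcnorm : ∀ k : ℕ, ‖c k‖ = 1 / (k + 1) := by
      intro k
      rw [hcdef]
      simp only [norm_mul, Complex.norm_I, Complex.norm_real, Real.norm_eq_abs, mul_one]
      rw [abs_of_pos (by positivity)]
    choose R hR1 hR2 hR3 using fun k : ℕ => Stmt5Aux.resolvent hA (c k) (hc0 k) (hconjc k)
    -- quantitative bound on domain elements
    have hRd : ∀ (k : ℕ) (x : A.domain),
        ‖R k (x : 𝓗) - (x : 𝓗)‖ ≤ (1 / (k + 1)) * ‖A x‖ := by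
      intro k x
      have hdiff : R k (x : 𝓗) - (x : 𝓗) = -(c k • R k (A x)) := by
        calc R k (x : 𝓗) - (x : 𝓗)
            = R k (x : 𝓗) - R k ((x : 𝓗) + c k • A x) := by rw [hR3 k x]
          _ = R k ((x : 𝓗) - ((x : 𝓗) + c k • A x)) := (map_sub (R k) _ _).symm
          _ = R k (-(c k • A x)) := by congr 1; abel
          _ = -(c k • R k (A x)) := by rw [map_neg, map_smul]
      rw [hdiff, norm_neg, norm_smul, hcnorm k]
      exact mul_le_mul_of_nonneg_left (hR2 k (A x)) (by positivity)
    -- strong convergence of the resolvents to the identity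
    have hRid : ∀ v : 𝓗, Tendsto (fun k => R k v) atTop (𝓝 v) := by
      intro v
      rw [Metric.tendsto_atTop]
      intro ε hε
      obtain ⟨x0, hx0mem, hx0⟩ := hA.dense_domain.exists_dist_lt v
        (show (0 : ℝ) < ε / 4 by linarith)
      set x : A.domain := ⟨x0, hx0mem⟩ with hx
      obtain ⟨K, hK⟩ := exists_nat_gt (4 * ‖A x‖ / ε)
      refine ⟨K, fun k hk => ?_⟩
      have h1 : ‖R k v - R k x0‖ ≤ ε / 4 := by
        rw [← map_sub]
        calc ‖R k (v - x0)‖ ≤ ‖v - x0‖ := hR2 k _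
          _ ≤ ε / 4 := le_of_lt (by rwa [dist_eq_norm] at hx0)
      have h2 : ‖R k x0 - x0‖ ≤ (1 / (k + 1)) * ‖A x‖ := hRd k x
      have h3 : (1 / ((k : ℝ) + 1)) * ‖A x‖ < ε / 4 := by
        have hk1 : (K : ℝ) ≤ k := Nat.cast_le.mpr hk
        have hgt : 4 * ‖A x‖ / ε < (k : ℝ) + 1 := by linarith
        rw [div_mul_eq_mul_div, one_mul, div_lt_iff₀ (by positivity)]
        have hb : 4 * ‖A x‖ < ε * ((k : ℝ) + 1) := by
          rw [div_lt_iff₀ hε] at hgt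
          linarith
        linarith
      have h4 : ‖x0 - v‖ < ε / 4 := by
        rw [← dist_eq_norm, dist_comm]
        exact hx0
      calc dist (R k v) v ≤ ‖R k v - R k x0‖ + ‖R k x0 - x0‖ + ‖x0 - v‖ := by
            rw [dist_eq_norm]
            have hre : R k v - v = R k v - R k x0 + (R k x0 - x0) + (x0 - v) := by abel
            rw [hre]
            exact (norm_add_le _ _).trans (add_le_add_left (norm_add_le _ _) _)
        _ < ε := by linarith
    -- the regularized commutator vanishes on the eigenvector pair
    have hkey : ∀ k : ℕ, ⟪χ, U (R k (star U (B (star U (R k φ)))))⟫ = 0 := by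
      intro k
      obtain ⟨hm1, heq1⟩ := hR1 k φ
      set xh : A.domain := ⟨R k φ, hm1⟩ with hxh
      have hms : star U (xh : 𝓗) ∈ A.domain := Stmt5Aux.memUstar hA hB xh
      set xs : A.domain := ⟨star U (R k φ), hms⟩ with hxs
      have hdec : A xh = U (A xs) + B (star U (R k φ)) :=
        Stmt5Aux.AU_decomp hU hA hB xh hms
      set g : 𝓗 := star U (B (star U (R k φ))) with hg
      have hφdec : φ = R k φ + c k • A xh := heq1.symm
      have h2 : star U φ = ((xs : 𝓗) + c k • A xs) + c k • g := by
        conv_lhs => rw [hφdec]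
        rw [map_add, map_smul, hdec, map_add, Stmt5Aux.unitary_star_apply hU (A xs)]
        rw [smul_add]
        abel
      have h3 : R k (star U φ) = (xs : 𝓗) + c k • R k g := by
        rw [h2, map_add, map_smul, hR3 k xs]
      have h5 : (c k)⁻¹ • (star U φ - R k (star U φ)) = A xs + (g - R k g) := by
        rw [h3, h2]
        have hmod : ((xs : 𝓗) + c k • A xs) + c k • g - ((xs : 𝓗) + c k • R k g)
            = c k • (A xs + (g - R k g)) := by module
        rw [hmod, smul_smul, inv_mul_cancel₀ (hc0 k), one_smul]
      have h6 : (c k)⁻¹ • (φ - R k φ) = A xh := by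
        have hmod : c k • A xh = φ - R k φ :=
          eq_sub_of_add_eq (by rw [add_comm]; exact heq1)
        rw [← hmod, smul_smul, inv_mul_cancel₀ (hc0 k), one_smul]
      have hFeq : (c k)⁻¹ • (φ - R k φ) - U ((c k)⁻¹ • (star U φ - R k (star U φ)))
          = U (R k g) := by
        rw [h5, h6, map_add, map_sub]
        have hUg : U g = B (star U (R k φ)) := Stmt5Aux.unitary_apply_star hU _
        rw [hUg, hdec]
        abel
      have hvan : ⟪χ, (c k)⁻¹ • (φ - R k φ)
          - U ((c k)⁻¹ • (star U φ - R k (star U φ)))⟫ = 0 := by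
        have ha : (c k)⁻¹ • (star U φ - R k (star U φ))
            = zb • ((c k)⁻¹ • (φ - R k φ)) := by
          rw [hUs, map_smul, ← smul_sub, smul_comm]
        have hgen : ∀ a : 𝓗, ⟪χ, a - U (zb • a)⟫ = 0 := by
          intro a
          rw [map_smul, inner_sub_right, inner_smul_right,
            ← Stmt5Aux.inner_star_left U χ a, hUsD, inner_smul_left, hconjzb,
            ← mul_assoc, hzbz, one_mul, sub_self]
        rw [ha]
        exact hgen _
      rw [← hFeq]
      exact hvan
    -- pass to the limit
    have hvec : Tendsto (fun k => U (R k (star U (B (star U (R k φ)))))) atTop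
        (𝓝 (B (star U φ))) := by
      set gl : 𝓗 := star U (B (star U φ)) with hgl
      have hgconv : Tendsto (fun k => star U (B (star U (R k φ)))) atTop (𝓝 gl) := by
        have hcont : Continuous fun v : 𝓗 => star U (B (star U v)) :=
          (star U).continuous.comp (B.continuous.comp (star U).continuous)
        exact (hcont.tendsto φ).comp (hRid φ)
      have hnorm0 : Tendsto
          (fun k => ‖R k (star U (B (star U (R k φ)))) - gl‖) atTop (𝓝 0) := by
        have hb : ∀ k, ‖R k (star U (B (star U (R k φ)))) - gl‖
            ≤ ‖star U (B (star U (R k φ))) - gl‖ + ‖R k gl - gl‖ := by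
          intro k
          calc ‖R k (star U (B (star U (R k φ)))) - gl‖
              ≤ ‖R k (star U (B (star U (R k φ)))) - R k gl‖ + ‖R k gl - gl‖ := by
                have htr := dist_triangle (R k (star U (B (star U (R k φ))))) (R k gl) gl
                rwa [dist_eq_norm, dist_eq_norm, dist_eq_norm] at htr
            _ ≤ ‖star U (B (star U (R k φ))) - gl‖ + ‖R k gl - gl‖ := by
                rw [← map_sub]
                exact add_le_add_left (hR2 k _) _
        have hz2 : Tendsto (fun k => ‖star U (B (star U (R k φ))) - gl‖
            + ‖R k gl - gl‖) atTop (𝓝 0) := by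
          have t1 : Tendsto (fun k => ‖star U (B (star U (R k φ))) - gl‖) atTop (𝓝 0) :=
            tendsto_iff_norm_sub_tendsto_zero.mp hgconv
          have t2 : Tendsto (fun k => ‖R k gl - gl‖) atTop (𝓝 0) :=
            tendsto_iff_norm_sub_tendsto_zero.mp (hRid gl)
          simpa using t1.add t2
        exact squeeze_zero (fun k => norm_nonneg _) hb hz2
      have hRconv : Tendsto (fun k => R k (star U (B (star U (R k φ))))) atTop (𝓝 gl) :=
        tendsto_iff_norm_sub_tendsto_zero.mpr hnorm0
      have := (U.continuous.tendsto gl).comp hRconv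
      rwa [show U gl = B (star U φ) from Stmt5Aux.unitary_apply_star hU _] at this
    have hconv : Tendsto (fun k => ⟪χ, U (R k (star U (B (star U (R k φ)))))⟫) atTop
        (𝓝 ⟪χ, B (star U φ)⟫) := tendsto_const_nhds.inner hvec
    have h0 : Tendsto (fun k => ⟪χ, U (R k (star U (B (star U (R k φ)))))⟫) atTop
        (𝓝 (0 : ℂ)) := by
      rw [show (fun k => ⟪χ, U (R k (star U (B (star U (R k φ)))))⟫)
        = fun _ => (0 : ℂ) from funext hkey]
      exact tendsto_const_nhds
    exact tendsto_nhds_unique hconv h0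
  -- conclusion
  have hfin : ⟪D φ, D φ⟫ = 0 := by
    rw [hUs, map_smul, inner_smul_right] at hvir
    rw [hC]
    exact hvir
  have hD0 : D φ = 0 := inner_self_eq_zero.mp hfin
  have hker : φ ∈ LinearMap.ker (D : 𝓗 →ₗ[ℂ] 𝓗) := LinearMap.mem_ker.mpr hD0
  have : ⟪φ, φ⟫ = (0 : ℂ) := (Submodule.mem_orthogonal _ φ).mp hφmem φ hker
  exact hφ0 (inner_self_eq_zero.mp this)
end

section
/- Suppose U is unitary, A is self-adjoint, U ∈ C^1(A), and the commutation relation [A,U] = g₀U holds for some nonzero real constant g₀. Then e^{itA/g₀} U^n e^{-itA/g₀} = e^{itn} U^n for all t ∈ ℝ and n ∈ ℤ. -/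
/-!
The group `W` leaves `D(A)` invariant and commutes with `A` there: differentiating
`s ↦ ⟪W s ψ, A η⟫ - ⟪A ψ, W (-s) η⟫` and using `A = A*` shows that `W t ψ` lies in the domain of
`A* = A`. For `ψ ∈ D(A)`, the commutation relation then turns `F s = ⟪W (-s) ψ, U W (-s) ψ⟫` into a
solution of `F' = i F`, so `W t U W (-t)` and `e^{it} U` have the same quadratic form on the dense
subspace `D(A)`; over `ℂ` this forces `W t U W (-t) = e^{it} U`. Conjugation by `W t` is an
automorphism of the unitary group and `e^{it}` is central, which gives the identity for `U^n`.
-/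

open scoped ComplexInnerProductSpace InnerProductSpace

theorem Complex.eq_exp_mul_of_hasDerivAt {f : ℝ → ℂ} {a : ℂ}
    (hf : ∀ s, HasDerivAt f (a * f s) s) (t : ℝ) : f t = exp (a * t) * f 0 := by
  have hg : ∀ s : ℝ, HasDerivAt (fun s : ℝ => exp (-(a * s)) * f s) 0 s := by
    intro s
    have he : HasDerivAt (fun s : ℝ => -(a * s)) (-(a * 1)) s :=
      ((hasDerivAt_id s).ofReal_comp.const_mul a).neg
    exact (he.cexp.mul (hf s)).congr_deriv (by ring)
  have hconst := is_const_of_deriv_eq_zero (fun s => (hg s).differentiableAt)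
    (fun s => (hg s).deriv) t 0
  simp only [ofReal_zero, mul_zero, neg_zero, exp_zero, one_mul] at hconst
  rw [← hconst, ← mul_assoc, ← exp_add, add_neg_cancel, exp_zero, one_mul]

theorem ContinuousLinearMap.ext_inner_map_of_dense {E : Type*} [NormedAddCommGroup E]
    [InnerProductSpace ℂ E] {S T : E →L[ℂ] E} {D : Set E} (hD : Dense D)
    (h : ∀ x ∈ D, ⟪x, S x⟫ = ⟪x, T x⟫) : S = T := by
  have hall : (fun x => ⟪x, S x⟫) = fun x => ⟪x, T x⟫ :=
    Continuous.ext_on hD (by fun_prop) (by fun_prop) h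
  refine coe_injective ((ext_inner_map _ _).mp fun x => ?_)
  rw [← inner_conj_symm, coe_coe, congrFun hall x, inner_conj_symm, coe_coe]

section SelfAdjoint

variable {𝕜 E : Type*} [RCLike 𝕜] [NormedAddCommGroup E] [InnerProductSpace 𝕜 E]
  [CompleteSpace E] {A : E →ₗ.[𝕜] E}

theorem IsSelfAdjoint.isFormalAdjoint (hA : IsSelfAdjoint A) : A.IsFormalAdjoint A := by
  simpa only [LinearPMap.isSelfAdjoint_def.mp hA] using
    LinearPMap.adjoint_isFormalAdjoint hA.dense_domain

theorem IsSelfAdjoint.exists_mem_domain_apply_eq (hA : IsSelfAdjoint A) {y z : E}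
    (h : ∀ x : A.domain, ⟪z, (x : E)⟫_𝕜 = ⟪y, A x⟫_𝕜) :
    ∃ hy : y ∈ A.domain, A ⟨y, hy⟩ = z := by
  have hy : y ∈ A.adjoint.domain := LinearPMap.mem_adjoint_domain_of_exists _ ⟨z, h⟩
  have hAy : A.adjoint ⟨y, hy⟩ = z := LinearPMap.adjoint_apply_eq hA.dense_domain ⟨y, hy⟩ h
  exact (LinearPMap.isSelfAdjoint_def.mp hA) ▸ ⟨hy, hAy⟩

end SelfAdjoint

namespace Unitary

variable {R A : Type*} [Monoid R] [Monoid A] [MulAction R A] [SMulCommClass R A A]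
  [IsScalarTower R A A] [StarMul R] [StarMul A] [StarModule R A]

instance : SMulCommClass (unitary R) (unitary A) (unitary A) where
  smul_comm _ _ _ := Subtype.ext <| (mul_smul_comm _ _ _).symm

instance : IsScalarTower (unitary R) (unitary A) (unitary A) where
  smul_assoc _ _ _ := Subtype.ext <| smul_mul_assoc _ _ _

end Unitary

section UnitaryGroup

variable {𝓗 : Type*} [NormedAddCommGroup 𝓗] [InnerProductSpace ℂ 𝓗] [CompleteSpace 𝓗]

/-- `W t = exp (i t κ A)`. -/
structure IsUnitaryGroupGeneratedBy (W : ℝ → 𝓗 →L[ℂ] 𝓗) (κ : ℝ) (A : 𝓗 →ₗ.[ℂ] 𝓗) : Prop where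
  map_zero : W 0 = 1
  map_add : ∀ s t, W (s + t) = W s * W t
  mem_unitary : ∀ t, W t ∈ unitary (𝓗 →L[ℂ] 𝓗)
  hasDerivAt : ∀ (φ : A.domain) (t : ℝ),
    HasDerivAt (fun s => W s (φ : 𝓗)) ((Complex.I * κ) • W t (A φ)) t

namespace IsUnitaryGroupGeneratedBy

variable {W : ℝ → 𝓗 →L[ℂ] 𝓗} {κ : ℝ} {A : 𝓗 →ₗ.[ℂ] 𝓗}

theorem star_eq (hW : IsUnitaryGroupGeneratedBy W κ A) (t : ℝ) : star (W t) = W (-t) := by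
  calc star (W t) = star (W t) * (W t * W (-t)) := by
        rw [← hW.map_add, add_neg_cancel, hW.map_zero, mul_one]
    _ = W (-t) := by rw [← mul_assoc, Unitary.star_mul_self_of_mem (hW.mem_unitary t), one_mul]

theorem inner_map_left (hW : IsUnitaryGroupGeneratedBy W κ A) (s : ℝ) (x y : 𝓗) :
    ⟪W s x, y⟫ = ⟪x, W (-s) y⟫ := by
  rw [← hW.star_eq, ContinuousLinearMap.star_eq_adjoint, ContinuousLinearMap.adjoint_inner_right]

theorem hasDerivAt_comp_neg (hW : IsUnitaryGroupGeneratedBy W κ A) (φ : A.domain) (t : ℝ) :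
    HasDerivAt (fun s => W (-s) (φ : 𝓗)) (-((Complex.I * κ) • W (-t) (A φ))) t := by
  simpa [Function.comp_def] using (hW.hasDerivAt φ (-t)).scomp t (hasDerivAt_neg t)

theorem exists_mem_domain_apply_eq (hW : IsUnitaryGroupGeneratedBy W κ A) (hA : IsSelfAdjoint A)
    (ψ : A.domain) (t : ℝ) : ∃ h : W t (ψ : 𝓗) ∈ A.domain, A ⟨W t ψ, h⟩ = W t (A ψ) := by
  refine hA.exists_mem_domain_apply_eq fun η => ?_
  set G : ℝ → ℂ := fun s => ⟪W s (ψ : 𝓗), A η⟫ - ⟪(A ψ : 𝓗), W (-s) (η : 𝓗)⟫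
  have hG : ∀ s, HasDerivAt G 0 s := by
    intro s
    refine ((hW.hasDerivAt ψ s).inner ℂ (hasDerivAt_const s _)).sub
      ((hasDerivAt_const s _).inner ℂ (hW.hasDerivAt_comp_neg η s)) |>.congr_deriv ?_
    simp only [inner_zero_left, inner_zero_right, inner_smul_left, inner_smul_right,
      inner_neg_right, _root_.map_zero, hW.inner_map_left s, map_mul, Complex.conj_I,
      Complex.conj_ofReal]
    ring
  have hG0 : G 0 = 0 := by
    simp [G, hW.map_zero, hA.isFormalAdjoint ψ η]
  have hGt : G t = 0 := by
    rw [← hG0]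
    exact is_const_of_deriv_eq_zero (fun s => (hG s).differentiableAt) (fun s => (hG s).deriv) t 0
  exact (hW.inner_map_left t _ _).trans (sub_eq_zero.mp hGt).symm

theorem conj_eq_exp_smul (hW : IsUnitaryGroupGeneratedBy W κ A) (hA : IsSelfAdjoint A)
    {V : 𝓗 →L[ℂ] 𝓗} {c : ℂ}
    (hV : ∀ φ : A.domain, ⟪A φ, V φ⟫ - ⟪(φ : 𝓗), V (A φ)⟫ = c * ⟪(φ : 𝓗), V φ⟫) (t : ℝ) :
    W t * V * W (-t) = Complex.exp (Complex.I * κ * c * t) • V := by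
  refine ContinuousLinearMap.ext_inner_map_of_dense hA.dense_domain fun ψ hψ => ?_
  set F : ℝ → ℂ := fun s => ⟪W (-s) ψ, V (W (-s) ψ)⟫
  have hF : ∀ s, HasDerivAt F (Complex.I * κ * c * F s) s := by
    intro s
    have hψs := hW.hasDerivAt_comp_neg ⟨ψ, hψ⟩ s
    obtain ⟨hmem, hAW⟩ := hW.exists_mem_domain_apply_eq hA ⟨ψ, hψ⟩ (-s)
    have hc := hV ⟨W (-s) ψ, hmem⟩
    rw [hAW] at hc
    refine (hψs.inner ℂ ((V.restrictScalars ℝ).hasFDerivAt.comp_hasDerivAt s hψs)).congr_deriv ?_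
    simp only [ContinuousLinearMap.coe_restrictScalars', Function.comp_apply, map_neg, map_smul,
      inner_neg_left, inner_neg_right, inner_smul_left, inner_smul_right, map_mul,
      Complex.conj_I, Complex.conj_ofReal] at hc ⊢
    linear_combination (Complex.I * κ) * hc
  calc ⟪ψ, (W t * V * W (-t)) ψ⟫ = F t := by
        simpa using (hW.inner_map_left (-t) ψ (V (W (-t) ψ))).symm
    _ = Complex.exp (Complex.I * κ * c * t) * F 0 := Complex.eq_exp_mul_of_hasDerivAt hF t
    _ = _ := by simp [F, hW.map_zero]

end IsUnitaryGroupGeneratedBy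

end UnitaryGroup

/-- Suppose `U` is unitary, `A` is self-adjoint, `U ∈ C¹(A)`, and the
canonical commutation relation `[A,U] = g₀ U` holds for some `g₀ ∈ ℝ \ {0}`.  Then, with
`W t = e^{itA/g₀}` the unitary one-parameter group generated by `A/g₀`, one has
`e^{itA/g₀} U^n e^{-itA/g₀} = e^{itn} U^n` for all `t ∈ ℝ` and `n ∈ ℤ`. -/
theorem stmt10 {𝓗 : Type*} [NormedAddCommGroup 𝓗] [InnerProductSpace ℂ 𝓗] [CompleteSpace 𝓗]
    (U : 𝓗 →L[ℂ] 𝓗) (hU : U ∈ unitary (𝓗 →L[ℂ] 𝓗))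
    (A : 𝓗 →ₗ.[ℂ] 𝓗) (hA : IsSelfAdjoint A)
    (g₀ : ℝ) (hg₀ : g₀ ≠ 0)
    (hB : ∀ φ : A.domain,
      ⟪A φ, U (φ : 𝓗)⟫ - ⟪(φ : 𝓗), U (A φ)⟫ = ⟪(φ : 𝓗), ((g₀ : ℂ) • U) (φ : 𝓗)⟫)
    (W : ℝ → 𝓗 →L[ℂ] 𝓗)
    (hW0 : W 0 = 1) (hWgrp : ∀ s t : ℝ, W (s + t) = W s * W t)
    (hWu : ∀ t : ℝ, W t ∈ unitary (𝓗 →L[ℂ] 𝓗))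
    (hWgen : ∀ (φ : A.domain) (t : ℝ),
      HasDerivAt (fun s : ℝ => W s (φ : 𝓗)) ((Complex.I * (g₀ : ℂ)⁻¹) • W t (A φ)) t) :
    ∀ (t : ℝ) (n : ℤ),
      W t * ((((⟨U, hU⟩ : unitary (𝓗 →L[ℂ] 𝓗)) ^ n : unitary (𝓗 →L[ℂ] 𝓗))) : 𝓗 →L[ℂ] 𝓗)
          * W (-t) =
        Complex.exp (Complex.I * t * n) •
          ((((⟨U, hU⟩ : unitary (𝓗 →L[ℂ] 𝓗)) ^ n : unitary (𝓗 →L[ℂ] 𝓗))) : 𝓗 →L[ℂ] 𝓗) := by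
  intro t n
  have hW : IsUnitaryGroupGeneratedBy W g₀⁻¹ A :=
    ⟨hW0, hWgrp, hWu, by simpa only [Complex.ofReal_inv] using hWgen⟩
  have hUc : ∀ φ : A.domain, ⟪A φ, U φ⟫ - ⟪(φ : 𝓗), U (A φ)⟫ = g₀ * ⟪(φ : 𝓗), U φ⟫ := by
    simpa only [smul_apply, inner_smul_right] using hB
  have hconj : W t * U * W (-t) = Complex.exp (Complex.I * t) • U := by
    rw [hW.conj_eq_exp_smul hA hUc t, Complex.ofReal_inv]
    field_simp [Complex.ofReal_ne_zero.mpr hg₀]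
  let u : unitary (𝓗 →L[ℂ] 𝓗) := ⟨U, hU⟩
  let w : unitary (𝓗 →L[ℂ] 𝓗) := ⟨W t, hWu t⟩
  let z : unitary ℂ := ⟨Complex.exp (Complex.I * t), Unitary.mem_iff_star_mul_self.mpr <| by
    rw [Complex.star_def, ← Complex.exp_conj, ← Complex.exp_add]; simp⟩
  have hw_inv : ((w⁻¹ : unitary (𝓗 →L[ℂ] 𝓗)) : 𝓗 →L[ℂ] 𝓗) = W (-t) := hW.star_eq t
  have hwu : w * u * w⁻¹ = z • u := Subtype.ext <| by
    rw [Submonoid.coe_mul, Submonoid.coe_mul, hw_inv, Unitary.coe_smul]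
    exact hconj
  have hwun : w * u ^ n * w⁻¹ = z ^ n • u ^ n := by rw [← conj_zpow, hwu, smul_zpow]
  have hcoe := congrArg Subtype.val hwun
  rw [Submonoid.coe_mul, Submonoid.coe_mul, hw_inv, Unitary.coe_smul, Submonoid.smul_def,
    Unitary.coe_zpow] at hcoe
  rwa [mul_comm _ (n : ℂ), Complex.exp_int_mul]
end

section
/- Let H and A be self-adjoint operators satisfying (H−i)^{-1} ∈ C^1(A) with the homogeneous commutation relation e^{-itA} e^{isH} e^{itA} = e^{is e^t H} for all s, t ∈ ℝ. Then H restricted to ker(H)^⊥ has no eigenvalues. -/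
open scoped ComplexInnerProductSpace
open Complex Topology

/-!
An eigenvector `ψ` of `H` with eigenvalue `μ ≠ 0` is an eigenvector of every `e^{isH}`, and the
commutation relation makes `e^{itA} ψ` an eigenvector of `H` with eigenvalue `μ e^t`. For `t ≠ 0`
these eigenvalues differ, so choosing `s` suitably, `e^{itA} ψ` and `ψ` are eigenvectors of the
unitary `e^{isH}` for distinct eigenvalues, hence orthogonal. Letting `t → 0` gives `‖ψ‖² = 0`;
strong continuity of `e^{itA}` on all of the space follows from its differentiability on the dense
domain of `A` because the family is uniformly bounded.
-/

theorem eq_cexp_smul_of_hasDerivAt {E : Type*} [NormedAddCommGroup E] [NormedSpace ℂ E]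
    {f : ℝ → E} {c : ℂ} (hf : ∀ t, HasDerivAt f (c • f t) t) (t : ℝ) :
    f t = cexp (t * c) • f 0 := by
  have hderiv : ∀ s : ℝ, HasDerivAt (fun s : ℝ => cexp (-(s * c)) • f s) 0 s := by
    intro s
    have hexp : HasDerivAt (fun s : ℝ => cexp (-(s * c))) (-c * cexp (-(s * c))) s := by
      simpa [mul_comm] using ((hasDerivAt_id (s : ℂ)).mul_const c).neg.cexp.comp_ofReal
    refine (hexp.smul (hf s)).congr_deriv ?_
    rw [smul_smul, ← add_smul, neg_mul, mul_comm c, add_neg_cancel, zero_smul]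
  have hconst := is_const_of_deriv_eq_zero (fun s => (hderiv s).differentiableAt)
    (fun s => (hderiv s).deriv) t 0
  simp only [ofReal_zero, zero_mul, neg_zero, Complex.exp_zero, one_smul] at hconst
  rw [← hconst, smul_smul, ← Complex.exp_add, add_neg_cancel, Complex.exp_zero, one_smul]

theorem ContinuousLinearMap.inner_eq_zero_of_mem_unitary_of_apply_eq_smul {𝕜 E : Type*} [RCLike 𝕜]
    [NormedAddCommGroup E] [InnerProductSpace 𝕜 E] [CompleteSpace E] {U : E →L[𝕜] E}
    (hU : U ∈ unitary (E →L[𝕜] E)) {x y : E} {a b : 𝕜} (hx : U x = a • x) (hy : U y = b • y)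
    (ha : ‖a‖ = 1) (hab : a ≠ b) : inner 𝕜 x y = 0 := by
  have h := inner_map_map_of_mem_unitary hU x y
  rw [hx, hy, inner_smul_left, inner_smul_right, ← mul_assoc] at h
  by_contra hxy
  have hab' : (starRingEnd 𝕜) a * b = 1 := by
    simpa [hxy] using (mul_left_eq_self₀.mp h)
  apply hab
  calc a = a * ((starRingEnd 𝕜) a * b) := by rw [hab', mul_one]
    _ = b := by rw [← mul_assoc, RCLike.mul_conj, ha]; simp

theorem exists_cexp_mul_I_ne {a b : ℝ} (hab : a ≠ b) :
    ∃ s : ℝ, cexp (↑(s * a) * I) ≠ cexp (↑(s * b) * I) := by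
  refine ⟨Real.pi / (a - b), fun h => ?_⟩
  have hshift : Real.pi / (a - b) * a = Real.pi / (a - b) * b + Real.pi := by
    field_simp [sub_ne_zero.mpr hab]; ring
  have hsplit : cexp (↑(Real.pi / (a - b) * a) * I) = - cexp (↑(Real.pi / (a - b) * b) * I) := by
    rw [hshift, ofReal_add, add_mul, Complex.exp_add, Complex.exp_pi_mul_I, mul_neg_one]
  rw [hsplit, neg_eq_iff_add_eq_zero, ← two_mul] at h
  simp at h

theorem Equicontinuous.continuous_apply_of_dense {T X α : Type*} [TopologicalSpace T]
    [TopologicalSpace X] [UniformSpace α] {F : T → X → α} (hF : Equicontinuous F) {D : Set X}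
    (hD : Dense D) (hFD : ∀ x ∈ D, Continuous fun t => F t x) (x : X) :
    Continuous fun t => F t x := by
  rw [continuous_iff_continuousAt]
  intro t₀
  have hclosed := hF.isClosed_setOfPred_tendsto (l := 𝓝 t₀) (hF.continuous t₀)
  exact hclosed.closure_subset_iff.mpr (fun y hy => (hFD y hy).continuousAt) (hD x)

theorem stmt18_general {𝓗 : Type*} [NormedAddCommGroup 𝓗] [InnerProductSpace ℂ 𝓗] [CompleteSpace 𝓗]
    (Hop A : 𝓗 →ₗ.[ℂ] 𝓗) (hA : IsSelfAdjoint A)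
    (GH GA : ℝ → 𝓗 →L[ℂ] 𝓗)
    (hGH0 : GH 0 = 1)
    (hGHu : ∀ t : ℝ, GH t ∈ unitary (𝓗 →L[ℂ] 𝓗))
    (hGHgen : ∀ (φ : Hop.domain) (t : ℝ),
      HasDerivAt (fun s : ℝ => GH s (φ : 𝓗)) (Complex.I • GH t (Hop φ)) t)
    (hGA0 : GA 0 = 1) (hGAgrp : ∀ s t : ℝ, GA (s + t) = GA s * GA t)
    (hGAu : ∀ t : ℝ, GA t ∈ unitary (𝓗 →L[ℂ] 𝓗))
    (hGAgen : ∀ (φ : A.domain) (t : ℝ),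
      HasDerivAt (fun s : ℝ => GA s (φ : 𝓗)) (Complex.I • GA t (A φ)) t)
    (hcomm : ∀ s t : ℝ, GA (-t) * GH s * GA t = GH (s * Real.exp t)) :
    ∀ (ψ : Hop.domain) (μ : ℝ), Hop ψ = (μ : ℂ) • (ψ : 𝓗) →
      (∀ χ : Hop.domain, Hop χ = 0 → ⟪(χ : 𝓗), (ψ : 𝓗)⟫ = 0) → (ψ : 𝓗) = 0 := by
  intro ψ μ heig hortho
  by_cases hμ : μ = 0
  · exact inner_self_eq_zero.mp (hortho ψ (by simp [heig, hμ]))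
  have hGHψ (s : ℝ) : GH s ψ = cexp (↑(s * μ) * I) • (ψ : 𝓗) := by
    have hψ := eq_cexp_smul_of_hasDerivAt (f := fun s => GH s ψ) (c := μ * I)
      (fun t => by simpa only [heig, map_smul, smul_smul, mul_comm I] using hGHgen ψ t) s
    simpa [hGH0, mul_assoc] using hψ
  have hGHGAψ (s t : ℝ) : GH s (GA t ψ) = cexp (↑(s * (μ * Real.exp t)) * I) • GA t ψ := by
    have hintertwine : GH s * GA t = GA t * GH (s * Real.exp t) := by
      rw [← hcomm, ← mul_assoc, ← mul_assoc, ← hGAgrp, add_neg_cancel, hGA0, one_mul]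
    calc GH s (GA t ψ) = GA t (GH (s * Real.exp t) ψ) := DFunLike.congr_fun hintertwine (ψ : 𝓗)
      _ = _ := by rw [hGHψ, map_smul, mul_assoc, mul_comm (Real.exp t)]
  have horth (t : ℝ) (ht : t ≠ 0) : ⟪GA t ψ, (ψ : 𝓗)⟫ = 0 := by
    have hμt : μ * Real.exp t ≠ μ := by simpa [hμ] using ht
    obtain ⟨s, hs⟩ := exists_cexp_mul_I_ne hμt
    exact ContinuousLinearMap.inner_eq_zero_of_mem_unitary_of_apply_eq_smul (hGHu s) (hGHGAψ s t) (hGHψ s)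
      (norm_exp_ofReal_mul_I _) hs
  have hGAcont : Continuous fun t => GA t ψ := by
    refine Equicontinuous.continuous_apply_of_dense ?_ hA.dense_domain
      (fun φ hφ => continuous_iff_continuousAt.mpr fun t => (hGAgen ⟨φ, hφ⟩ t).continuousAt) _
    refine (LipschitzWith.uniformEquicontinuous _ 1 fun t => ?_).equicontinuous
    exact (AddMonoidHomClass.isometry_of_norm (GA t)
      (ContinuousLinearMap.norm_map_of_mem_unitary (hGAu t))).lipschitz
  have hinner := (hGAcont.inner continuous_const).ext_on (dense_compl_singleton 0)
    continuous_const horth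
  simpa [hGA0] using congrFun hinner 0

/-- Let `H` and `A` be self-adjoint operators satisfying
`(H−i)⁻¹ ∈ C¹(A)` (resolvent `R`, bounded commutator `B`), whose unitary groups
`GH s = e^{isH}` and `GA t = e^{itA}` satisfy the homogeneous commutation relation
`e^{-itA} e^{isH} e^{itA} = e^{is e^t H}` for all `s, t ∈ ℝ`.  Then `H` restricted to
`ker(H)ᗮ` has no eigenvalues: any eigenvector of `H` orthogonal to `ker H` vanishes. -/
theorem stmt18 {𝓗 : Type*} [NormedAddCommGroup 𝓗] [InnerProductSpace ℂ 𝓗] [CompleteSpace 𝓗]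
    (Hop A : 𝓗 →ₗ.[ℂ] 𝓗) (hH : IsSelfAdjoint Hop) (hA : IsSelfAdjoint A)
    (R : 𝓗 →L[ℂ] 𝓗) (hR1 : ∀ ψ : 𝓗, R ψ ∈ Hop.domain)
    (hR2 : ∀ ψ : 𝓗, Hop ⟨R ψ, hR1 ψ⟩ - Complex.I • R ψ = ψ)
    (B : 𝓗 →L[ℂ] 𝓗)
    (hB : ∀ φ : A.domain, ⟪A φ, R (φ : 𝓗)⟫ - ⟪(φ : 𝓗), R (A φ)⟫ = ⟪(φ : 𝓗), B (φ : 𝓗)⟫)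
    (GH GA : ℝ → 𝓗 →L[ℂ] 𝓗)
    (hGH0 : GH 0 = 1) (hGHgrp : ∀ s t : ℝ, GH (s + t) = GH s * GH t)
    (hGHu : ∀ t : ℝ, GH t ∈ unitary (𝓗 →L[ℂ] 𝓗))
    (hGHgen : ∀ (φ : Hop.domain) (t : ℝ),
      HasDerivAt (fun s : ℝ => GH s (φ : 𝓗)) (Complex.I • GH t (Hop φ)) t)
    (hGA0 : GA 0 = 1) (hGAgrp : ∀ s t : ℝ, GA (s + t) = GA s * GA t)
    (hGAu : ∀ t : ℝ, GA t ∈ unitary (𝓗 →L[ℂ] 𝓗))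
    (hGAgen : ∀ (φ : A.domain) (t : ℝ),
      HasDerivAt (fun s : ℝ => GA s (φ : 𝓗)) (Complex.I • GA t (A φ)) t)
    (hcomm : ∀ s t : ℝ, GA (-t) * GH s * GA t = GH (s * Real.exp t)) :
    ∀ (ψ : Hop.domain) (μ : ℝ), Hop ψ = (μ : ℂ) • (ψ : 𝓗) →
      (∀ χ : Hop.domain, Hop χ = 0 → ⟪(χ : 𝓗), (ψ : 𝓗)⟫ = 0) → (ψ : 𝓗) = 0 :=
  stmt18_general Hop A hA GH GA hGH0 hGHu hGHgen hGA0 hGAgrp hGAu hGAgen hcomm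
end
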